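/- arXiv:2307.07651 — 8 statements merged into one kernel-verified Lean document; each statement's English description precedes it below -/
import Mathlib

section
/- Suppose the primal SDP (minimize ⟨C,X⟩ s.t. A(X)=b, X ⪰ 0) and dual SDP are both strictly feasible and the matrices A_1,…,A_m are linearly independent. Then the dual optimal solution set D* = {(y,Z) : bᵀy = d*, Z + A*(y) = C, Z ⪰ 0} is nonempty and compact. -/
open Matrix

lemma myDiagNonneg {n : ℕ} {Z : Matrix (Fin n) (Fin n) ℝ} (hZ : Z.PosSemidef) (i : Fin n) :
    0 ≤ Z i i := by
  have := hZ.dotProduct_mulVec_nonneg (Pi.single i 1)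
  simpa [dotProduct, mulVec, Pi.single_apply] using this

lemma myDiagLeTrace {n : ℕ} {Z : Matrix (Fin n) (Fin n) ℝ} (hZ : Z.PosSemidef) (i : Fin n) :
    Z i i ≤ Z.trace := by
  rw [Matrix.trace]
  exact Finset.single_le_sum (fun k _ => myDiagNonneg hZ k) (Finset.mem_univ i)

lemma myEntryLe {n : ℕ} {Z : Matrix (Fin n) (Fin n) ℝ} (hZ : Z.PosSemidef) (i j : Fin n) :
    |Z i j| ≤ Z.trace := by
  rcases eq_or_ne i j with rfl | hij
  · rw [abs_of_nonneg (myDiagNonneg hZ i)]; exact myDiagLeTrace hZ i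
  · have hsym : Z j i = Z i j := by
      have := hZ.1
      have := congrFun (congrFun this i) j
      simpa [Matrix.conjTranspose_apply] using this
    have h1 : 0 ≤ Z i i + Z j i + (Z i j + Z j j) := by
      have := hZ.dotProduct_mulVec_nonneg (Pi.single i (1:ℝ) + Pi.single j 1)
      simpa [dotProduct, mulVec, Pi.single_apply, mul_add, add_mul, Finset.sum_add_distrib,
        Finset.sum_ite_eq, hij, hij.symm] using this
    have h2 : 0 ≤ Z i i - Z j i - (Z i j - Z j j) := by
      have := hZ.dotProduct_mulVec_nonneg (Pi.single i (1:ℝ) - Pi.single j 1)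
      simpa [dotProduct, mulVec, Pi.single_apply, mul_sub, sub_mul, Finset.sum_sub_distrib,
        Finset.sum_ite_eq, hij, hij.symm] using this
    have hii := myDiagNonneg hZ i
    have hjj := myDiagNonneg hZ j
    have h3 : |Z i j| ≤ (Z i i + Z j j) / 2 := by
      rw [abs_le]
      constructor <;> nlinarith [hsym]
    have h4 : Z i i ≤ Z.trace := myDiagLeTrace hZ i
    have h5 : Z j j ≤ Z.trace := myDiagLeTrace hZ j
    have h6 : 0 ≤ Z.trace := by
      rw [Matrix.trace]; exact Finset.sum_nonneg fun k _ => myDiagNonneg hZ k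
    linarith

lemma myTraceNonneg {n : ℕ} {Z : Matrix (Fin n) (Fin n) ℝ} (hZ : Z.PosSemidef) :
    0 ≤ Z.trace := by
  rw [Matrix.trace]
  exact Finset.sum_nonneg fun i _ => myDiagNonneg hZ i

open scoped MatrixOrder in
lemma myTraceMulNonneg {n : ℕ} {Z X : Matrix (Fin n) (Fin n) ℝ} (hZ : Z.PosSemidef)
    (hX : X.PosSemidef) : 0 ≤ (Z * X).trace := by
  have hB : CFC.sqrt X * CFC.sqrt X = X := CFC.sqrt_mul_sqrt_self X hX.nonneg
  have hBH : (CFC.sqrt X)ᴴ = CFC.sqrt X := (CFC.sqrt_nonneg X).posSemidef.1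
  have h : (Z * X).trace = (CFC.sqrt X * Z * CFC.sqrt X).trace := by
    conv_lhs => rw [← hB, ← Matrix.mul_assoc, Matrix.trace_mul_comm, ← Matrix.mul_assoc]
  rw [h, show CFC.sqrt X * Z * CFC.sqrt X = (CFC.sqrt X)ᴴ * Z * CFC.sqrt X by rw [hBH]]
  exact myTraceNonneg (hZ.conjTranspose_mul_mul_same (CFC.sqrt X))

lemma myEps {n : ℕ} {X : Matrix (Fin n) (Fin n) ℝ} (hX : X.PosDef) :
    ∃ ε : ℝ, 0 < ε ∧ (X - ε • 1).PosSemidef := by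
  rcases Nat.eq_zero_or_pos n with rfl | hn
  · exact ⟨1, one_pos, ⟨by ext i j; exact absurd i.2 (by omega), fun x => by
      simp [Finsupp.sum_fintype]⟩⟩
  · haveI : Nonempty (Fin n) := ⟨⟨0, hn⟩⟩
    set lam := hX.1.eigenvalues
    set ε := Finset.univ.inf' Finset.univ_nonempty lam with hε
    refine ⟨ε, ?_, ?_⟩
    · rw [hε, Finset.lt_inf'_iff]
      exact fun i _ => hX.eigenvalues_pos i
    · have hspec := hX.1.spectral_theorem
      set U : Matrix (Fin n) (Fin n) ℝ := (hX.1.eigenvectorUnitary : Matrix (Fin n) (Fin n) ℝ) with hUdef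
      have hU : U * star U = 1 := (Matrix.mem_unitaryGroup_iff).mp hX.1.eigenvectorUnitary.2
      rw [Unitary.conjStarAlgAut_apply, ← hUdef] at hspec
      have key : X - ε • 1 = U * diagonal (fun i => lam i - ε) * star U := by
        have h1 : (ε • (1 : Matrix (Fin n) (Fin n) ℝ)) = U * (diagonal fun _ => ε) * star U := by
          rw [show (diagonal fun _ : Fin n => ε) = ε • (1 : Matrix (Fin n) (Fin n) ℝ) by
            simp [Matrix.smul_one_eq_diagonal]]
          rw [Matrix.mul_smul, Matrix.smul_mul, Matrix.mul_one, hU]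
        calc X - ε • 1 = U * diagonal (RCLike.ofReal ∘ lam) * star U - U * (diagonal fun _ => ε) * star U := by
              rw [← hspec, ← h1]
          _ = U * diagonal (fun i => lam i - ε) * star U := by
              rw [← Matrix.sub_mul, ← Matrix.mul_sub, Matrix.diagonal_sub]
              norm_num [Function.comp]
      rw [key]
      have : (diagonal fun i => lam i - ε).PosSemidef := by
        refine Matrix.posSemidef_diagonal_iff.mpr fun i => ?_
        rw [sub_nonneg, hε]
        exact Finset.inf'_le _ (Finset.mem_univ i)
      simpa [Matrix.star_eq_conjTranspose] using this.mul_mul_conjTranspose_same U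

lemma contEntry {n : ℕ} (i j : Fin n) :
    Continuous fun Z : Matrix (Fin n) (Fin n) ℝ => Z i j :=
  (continuous_apply j).comp (continuous_apply i)

lemma contQuad {n : ℕ} (x : Fin n → ℝ) :
    Continuous fun Z : Matrix (Fin n) (Fin n) ℝ => x ⬝ᵥ Z *ᵥ x := by
  simp only [dotProduct, mulVec]
  exact continuous_finset_sum _ fun i _ =>
    continuous_const.mul (continuous_finset_sum _ fun j _ => (contEntry i j).mul continuous_const)

lemma contTraceMul {n : ℕ} (X : Matrix (Fin n) (Fin n) ℝ) :
    Continuous fun Z : Matrix (Fin n) (Fin n) ℝ => (Z * X).trace := by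
  simp only [Matrix.trace, Matrix.diag, Matrix.mul_apply]
  exact continuous_finset_sum _ fun i _ =>
    continuous_finset_sum _ fun j _ => (contEntry i j).mul continuous_const

lemma closedPSD {n : ℕ} : IsClosed {Z : Matrix (Fin n) (Fin n) ℝ | Z.PosSemidef} := by
  have heq : {Z : Matrix (Fin n) (Fin n) ℝ | Z.PosSemidef} =
      {Z : Matrix (Fin n) (Fin n) ℝ | Zᴴ = Z} ∩ ⋂ x : Fin n → ℝ, {Z | 0 ≤ x ⬝ᵥ Z *ᵥ x} := by
    ext Z
    simp only [Set.mem_setOf_eq, Set.mem_inter_iff, Set.mem_iInter]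
    constructor
    · exact fun h => ⟨h.1, fun x => by simpa using h.dotProduct_mulVec_nonneg x⟩
    · exact fun h => Matrix.PosSemidef.of_dotProduct_mulVec_nonneg h.1 fun x => by simpa using h.2 x
  rw [heq]
  refine IsClosed.inter (isClosed_eq ?_ continuous_id) (isClosed_iInter fun x =>
    isClosed_le continuous_const (contQuad x))
  exact continuous_pi fun i => continuous_pi fun j => continuous_star.comp (contEntry j i)

lemma compactPSDtrace {n : ℕ} {X : Matrix (Fin n) (Fin n) ℝ} (hX : X.PosDef) (T : ℝ) :
    IsCompact {Z : Matrix (Fin n) (Fin n) ℝ | Z.PosSemidef ∧ (Z * X).trace ≤ T} := by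
  obtain ⟨ε, hε, hXe⟩ := myEps hX
  set M := T / ε with hM
  have hbox : IsCompact (Set.univ.pi fun _ : Fin n =>
      Set.univ.pi fun _ : Fin n => Set.Icc (-M) M) :=
    isCompact_univ_pi fun _ => isCompact_univ_pi fun _ => isCompact_Icc
  refine IsCompact.of_isClosed_subset hbox
    (closedPSD.inter (isClosed_le (contTraceMul X) continuous_const)) ?_
  rintro Z ⟨hZ, hT⟩
  have htr : ε * Z.trace ≤ (Z * X).trace := by
    have h0 : 0 ≤ (Z * (X - ε • 1)).trace := myTraceMulNonneg hZ hXe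
    have : Z * (X - ε • 1) = Z * X - ε • Z := by
      rw [Matrix.mul_sub, Matrix.mul_smul, Matrix.mul_one]
    rw [this, Matrix.trace_sub, Matrix.trace_smul, sub_nonneg] at h0
    simpa using h0
  have htrZ : Z.trace ≤ M := by
    rw [hM, le_div_iff₀ hε]
    calc Z.trace * ε = ε * Z.trace := mul_comm _ _
      _ ≤ (Z * X).trace := htr
      _ ≤ T := hT
  intro i _
  intro j _
  have := (myEntryLe hZ i j).trans htrZ
  exact abs_le.mp this

/-- If both the primal and the dual SDP are strictly feasible and the constraint matrices
`A_1, …, A_m` are linearly independent, then the dual optimal solution set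
`D* = {(y, Z) | bᵀy = d*, Z + A*(y) = C, Z ⪰ 0}` is nonempty and compact. -/
theorem stmt5 {n m : ℕ} (A : Fin m → Matrix (Fin n) (Fin n) ℝ)
    (b : Fin m → ℝ) (C : Matrix (Fin n) (Fin n) ℝ)
    (hlin : LinearIndependent ℝ A)
    (hPstrict : ∃ X : Matrix (Fin n) (Fin n) ℝ, X.PosDef ∧ ∀ i, (A i * X).trace = b i)
    (hDstrict : ∃ (y : Fin m → ℝ) (Z : Matrix (Fin n) (Fin n) ℝ),
      Z.PosDef ∧ Z + ∑ i, y i • A i = C) :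
    let dstar : ℝ := sSup {r : ℝ | ∃ (y : Fin m → ℝ) (Z : Matrix (Fin n) (Fin n) ℝ),
      Z.PosSemidef ∧ Z + ∑ i, y i • A i = C ∧ r = ∑ i, b i * y i}
    let Dstar : Set ((Fin m → ℝ) × Matrix (Fin n) (Fin n) ℝ) :=
      {p | p.2.PosSemidef ∧ p.2 + ∑ i, p.1 i • A i = C ∧ ∑ i, b i * p.1 i = dstar}
    Dstar.Nonempty ∧ IsCompact Dstar := by
  intro dstar Dstar
  obtain ⟨Xh, hXh, hAX⟩ := hPstrict
  obtain ⟨y0, Z0, hZ0, hfeas0⟩ := hDstrict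
  -- the linear map L
  set L : (Fin m → ℝ) →ₗ[ℝ] Matrix (Fin n) (Fin n) ℝ :=
    { toFun := fun y => ∑ i, y i • A i
      map_add' := fun y z => by simp [add_smul, Finset.sum_add_distrib]
      map_smul' := fun c y => by simp [smul_smul, Finset.smul_sum] } with hLdef
  have hLapp : ∀ y, L y = ∑ i, y i • A i := fun y => rfl
  have hLker : LinearMap.ker L = ⊥ := by
    rw [LinearMap.ker_eq_bot']
    intro y hy
    funext i
    exact Fintype.linearIndependent_iff.mp hlin y (by simpa [hLapp] using hy) i
  obtain ⟨g, hg⟩ := L.exists_leftInverse_of_injective hLker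
  have hgL : ∀ y, g (L y) = y := fun y => LinearMap.congr_fun hg y
  -- continuity facts
  have hcontg : Continuous fun Z : Matrix (Fin n) (Fin n) ℝ => g (C - Z) :=
    (LinearMap.continuous_of_finiteDimensional g).comp (continuous_const.sub continuous_id)
  have hcontLg : Continuous fun Z : Matrix (Fin n) (Fin n) ℝ => L (g (C - Z)) :=
    (LinearMap.continuous_of_finiteDimensional L).comp hcontg
  set f : Matrix (Fin n) (Fin n) ℝ → ℝ := fun Z => ∑ i, b i * (g (C - Z)) i with hfdef
  have hcontf : Continuous f :=
    continuous_finset_sum _ fun i _ =>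
      continuous_const.mul ((continuous_apply i).comp hcontg)
  -- key trace identity
  have hkey : ∀ (y : Fin m → ℝ) (Z : Matrix (Fin n) (Fin n) ℝ),
      Z + ∑ i, y i • A i = C → (Z * Xh).trace = (C * Xh).trace - ∑ i, b i * y i := by
    intro y Z hfeas
    have hZeq : Z = C - ∑ i, y i • A i := by rw [← hfeas]; abel
    rw [hZeq, Matrix.sub_mul, Matrix.trace_sub, Finset.sum_mul, Matrix.trace_sum]
    congr 1
    rw [Finset.sum_congr rfl fun i _ => by
      rw [Matrix.smul_mul, Matrix.trace_smul, hAX i, smul_eq_mul, mul_comm]]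
  set v0 : ℝ := ∑ i, b i * y0 i with hv0def
  -- the auxiliary compact slice
  set SZ' : Set (Matrix (Fin n) (Fin n) ℝ) :=
    {Z | Z.PosSemidef ∧ L (g (C - Z)) = C - Z ∧ v0 ≤ f Z} with hSZ'def
  have hmemSZ' : ∀ Z ∈ SZ', Z + ∑ i, (g (C - Z)) i • A i = C := by
    intro Z hZ
    have := hZ.2.1
    rw [hLapp] at this
    rw [this]; abel
  have hclosed' : IsClosed SZ' := by
    have heq : SZ' = {Z : Matrix (Fin n) (Fin n) ℝ | Z.PosSemidef} ∩
        ({Z : Matrix (Fin n) (Fin n) ℝ | L (g (C - Z)) = C - Z} ∩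
         {Z : Matrix (Fin n) (Fin n) ℝ | v0 ≤ f Z}) := by
      ext Z; simp [hSZ'def, Set.mem_setOf_eq, and_assoc]
    rw [heq]
    exact closedPSD.inter ((isClosed_eq hcontLg (continuous_const.sub continuous_id)).inter
      (isClosed_le continuous_const hcontf))
  have hsub' : SZ' ⊆ {Z | Z.PosSemidef ∧ (Z * Xh).trace ≤ (C * Xh).trace - v0} := by
    intro Z hZ
    refine ⟨hZ.1, ?_⟩
    rw [hkey (g (C - Z)) Z (hmemSZ' Z hZ)]
    have := hZ.2.2
    simp only [hfdef] at this
    linarith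
  have hcompact' : IsCompact SZ' :=
    (compactPSDtrace hXh ((C * Xh).trace - v0)).of_isClosed_subset hclosed' hsub'
  have hZ0mem : Z0 ∈ SZ' := by
    have hCZ0 : C - Z0 = L y0 := by rw [hLapp, ← hfeas0]; abel
    have hgy0 : g (C - Z0) = y0 := by rw [hCZ0, hgL]
    refine ⟨hZ0.posSemidef, ?_, ?_⟩
    · rw [hgy0, ← hCZ0]
    · simp only [hfdef, hgy0, hv0def, le_refl]
  obtain ⟨Zs, hZsmem, hmax⟩ := hcompact'.exists_isMaxOn ⟨Z0, hZ0mem⟩ hcontf.continuousOn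
  set ys : Fin m → ℝ := g (C - Zs) with hysdef
  have hfeass : Zs + ∑ i, ys i • A i = C := hmemSZ' Zs hZsmem
  -- dstar equals the attained max
  have hmemV : f Zs ∈ {r : ℝ | ∃ (y : Fin m → ℝ) (Z : Matrix (Fin n) (Fin n) ℝ),
      Z.PosSemidef ∧ Z + ∑ i, y i • A i = C ∧ r = ∑ i, b i * y i} :=
    ⟨ys, Zs, hZsmem.1, hfeass, rfl⟩
  have hub : ∀ r ∈ {r : ℝ | ∃ (y : Fin m → ℝ) (Z : Matrix (Fin n) (Fin n) ℝ),
      Z.PosSemidef ∧ Z + ∑ i, y i • A i = C ∧ r = ∑ i, b i * y i}, r ≤ f Zs := by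
    rintro r ⟨y, Z, hZpsd, hfeas, rfl⟩
    have hCZ : C - Z = L y := by rw [hLapp, ← hfeas]; abel
    have hgy : g (C - Z) = y := by rw [hCZ, hgL]
    have hfZ : f Z = ∑ i, b i * y i := by simp only [hfdef, hgy]
    rcases le_or_gt v0 (∑ i, b i * y i) with h | h
    · have hZmem : Z ∈ SZ' := ⟨hZpsd, by rw [hgy, ← hCZ], by rw [hfZ]; exact h⟩
      have h2 : f Z ≤ f Zs := hmax hZmem
      rwa [hfZ] at h2
    · have hv0le : v0 ≤ f Zs := by
        have h3 : f Z0 ≤ f Zs := hmax hZ0mem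
        have hfZ0 : f Z0 = v0 := by
          have hCZ0 : C - Z0 = L y0 := by rw [hLapp, ← hfeas0]; abel
          simp only [hfdef, hCZ0, hgL, hv0def]
        linarith
      linarith
  have hdstar : dstar = f Zs :=
    le_antisymm (csSup_le ⟨f Zs, hmemV⟩ hub) (le_csSup ⟨f Zs, hub⟩ hmemV)
  constructor
  · exact ⟨(ys, Zs), hZsmem.1, hfeass, hdstar.symm⟩
  · -- compactness of Dstar
    set SZ : Set (Matrix (Fin n) (Fin n) ℝ) :=
      {Z | Z.PosSemidef ∧ L (g (C - Z)) = C - Z ∧ f Z = dstar} with hSZdef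
    have hmemSZ : ∀ Z ∈ SZ, Z + ∑ i, (g (C - Z)) i • A i = C := by
      intro Z hZ
      have := hZ.2.1
      rw [hLapp] at this
      rw [this]; abel
    have hclosed : IsClosed SZ := by
      have heq : SZ = {Z : Matrix (Fin n) (Fin n) ℝ | Z.PosSemidef} ∩
          ({Z : Matrix (Fin n) (Fin n) ℝ | L (g (C - Z)) = C - Z} ∩
           {Z : Matrix (Fin n) (Fin n) ℝ | f Z = dstar}) := by
        ext Z; simp [hSZdef, Set.mem_setOf_eq, and_assoc]
      rw [heq]
      exact closedPSD.inter ((isClosed_eq hcontLg (continuous_const.sub continuous_id)).inter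
        (isClosed_eq hcontf continuous_const))
    have hsub : SZ ⊆ {Z | Z.PosSemidef ∧ (Z * Xh).trace ≤ (C * Xh).trace - dstar} := by
      intro Z hZ
      refine ⟨hZ.1, ?_⟩
      rw [hkey (g (C - Z)) Z (hmemSZ Z hZ)]
      have := hZ.2.2
      simp only [hfdef] at this
      linarith
    have hcompactSZ : IsCompact SZ :=
      (compactPSDtrace hXh ((C * Xh).trace - dstar)).of_isClosed_subset hclosed hsub
    have himg : Dstar = (fun Z => (g (C - Z), Z)) '' SZ := by
      ext ⟨y, Z⟩
      simp only [Set.mem_image, Set.mem_setOf_eq, Prod.mk.injEq]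
      constructor
      · rintro ⟨hpsd, hfeas, hval⟩
        have hCZ : C - Z = L y := by rw [hLapp, ← hfeas]; abel
        have hgy : g (C - Z) = y := by rw [hCZ, hgL]
        exact ⟨Z, ⟨hpsd, by rw [hgy, ← hCZ], by simp only [hfdef, hgy]; exact hval⟩, hgy, rfl⟩
      · rintro ⟨Z', ⟨hpsd, hfix, hval⟩, hy, rfl⟩
        refine ⟨hpsd, ?_, ?_⟩
        · rw [← hy]
          exact hmemSZ Z' ⟨hpsd, hfix, hval⟩
        · rw [← hy]
          exact hval
    rw [himg]
    exact hcompactSZ.image (Continuous.prodMk hcontg continuous_id)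
end

section
/- Suppose the affine constraints ⟨A_i, X⟩ = b_i (i=1,…,m) imply tr(X) = k for some k > 0 for every feasible X. Then the penalized dual problem min_y { −bᵀy + ρ·max{λ_max(A*(y)−C), 0} } with any exact penalty parameter simplifies: the dual SDP max{bᵀy : Z + A*(y) = C, Z ⪰ 0} has the same optimal value as min_y { −bᵀy + k·λ_max(A*(y) − C) }, assuming strong duality holds and rank(Z*) ≤ n−1 at every dual optimum. -/
open Matrix

/-- The largest eigenvalue of a Hermitian real matrix. -/
noncomputable def maxEig {n : ℕ} (X : Matrix (Fin n) (Fin n) ℝ) (hX : X.IsHermitian) : ℝ :=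
  ⨆ i, hX.eigenvalues i

lemma maxEig_congr {n : ℕ} {M N : Matrix (Fin n) (Fin n) ℝ} (h : M = N)
    (hM : M.IsHermitian) (hN : N.IsHermitian) : maxEig M hM = maxEig N hN := by
  subst h; rfl

lemma eig_le_maxEig {n : ℕ} {M : Matrix (Fin n) (Fin n) ℝ} (hM : M.IsHermitian) (i : Fin n) :
    hM.eigenvalues i ≤ maxEig M hM :=
  le_ciSup (Set.Finite.bddAbove (Set.finite_range _)) i

lemma maxEig_neg_nonpos {n : ℕ} (hn : 0 < n) {Z : Matrix (Fin n) (Fin n) ℝ}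
    (hZ : Z.PosSemidef) (h : (-Z).IsHermitian) : maxEig (-Z) h ≤ 0 := by
  have : Nonempty (Fin n) := ⟨⟨0, hn⟩⟩
  refine ciSup_le fun i => ?_
  rw [h.eigenvalues_eq]
  have := hZ.dotProduct_mulVec_nonneg ⇑(h.eigenvectorBasis i)
  simp only [neg_mulVec, dotProduct_neg]
  simpa using neg_nonpos_of_nonneg this

lemma psd_smul_one_sub {n : ℕ} {M : Matrix (Fin n) (Fin n) ℝ} (hM : M.IsHermitian) {t : ℝ}
    (h : ∀ i, hM.eigenvalues i ≤ t) :
    (t • (1 : Matrix (Fin n) (Fin n) ℝ) - M).PosSemidef := by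
  have hU : (hM.eigenvectorUnitary : Matrix (Fin n) (Fin n) ℝ) *
      (star (hM.eigenvectorUnitary : Matrix (Fin n) (Fin n) ℝ)) = 1 :=
    (Matrix.mem_unitaryGroup_iff).mp hM.eigenvectorUnitary.2
  have hd : (diagonal (fun i => t - hM.eigenvalues i) : Matrix (Fin n) (Fin n) ℝ)
      = t • 1 - diagonal (RCLike.ofReal ∘ hM.eigenvalues) := by
    rw [smul_one_eq_diagonal, ← diagonal_sub]
    rfl
  have key : t • (1 : Matrix (Fin n) (Fin n) ℝ) - M =
      (hM.eigenvectorUnitary : Matrix (Fin n) (Fin n) ℝ) *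
        (diagonal (fun i => t - hM.eigenvalues i)) *
        (star (hM.eigenvectorUnitary : Matrix (Fin n) (Fin n) ℝ)) := by
    have e1 : (hM.eigenvectorUnitary : Matrix (Fin n) (Fin n) ℝ) *
        (diagonal (fun i => t - hM.eigenvalues i)) *
        (star (hM.eigenvectorUnitary : Matrix (Fin n) (Fin n) ℝ))
        = (hM.eigenvectorUnitary : Matrix (Fin n) (Fin n) ℝ) * (t • 1) *
            (star (hM.eigenvectorUnitary : Matrix (Fin n) (Fin n) ℝ))
          - (hM.eigenvectorUnitary : Matrix (Fin n) (Fin n) ℝ) *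
              (diagonal (RCLike.ofReal ∘ hM.eigenvalues)) *
              (star (hM.eigenvectorUnitary : Matrix (Fin n) (Fin n) ℝ)) := by
      rw [hd, mul_sub, sub_mul]
    have hs := hM.spectral_theorem
    rw [Unitary.conjStarAlgAut_apply] at hs
    rw [e1, ← hs, Matrix.mul_smul, Matrix.smul_mul, mul_one, hU]
  rw [key]
  exact (Matrix.posSemidef_diagonal_iff.mpr
    (fun i => sub_nonneg.mpr (h i))).mul_mul_conjTranspose_same _

lemma herm_sum_smul {n m : ℕ} (A : Fin m → Matrix (Fin n) (Fin n) ℝ)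
    (hA : ∀ i, (A i).IsHermitian) (y : Fin m → ℝ) : (∑ i, y i • A i).IsHermitian := by
  unfold Matrix.IsHermitian
  rw [conjTranspose_sum]
  exact Finset.sum_congr rfl fun i _ => by
    rw [conjTranspose_smul, (hA i).eq, star_trivial]

lemma trace_eq_of_forall {n : ℕ} {M N : Matrix (Fin n) (Fin n) ℝ}
    (h : ∀ X, (M * X).trace = (N * X).trace) : M = N := by
  have e : ∀ (M : Matrix (Fin n) (Fin n) ℝ) i j, (M * single j i 1).trace = M i j := by
    intro M i j
    simp [Matrix.trace, Matrix.diag, Matrix.mul_apply, Matrix.single, ite_and,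
      Finset.sum_ite_eq]
  ext i j
  rw [← e M i j, ← e N i j, h]

lemma trace_sum_smul_mul {n m : ℕ} (c : Fin m → ℝ) (A : Fin m → Matrix (Fin n) (Fin n) ℝ)
    (X : Matrix (Fin n) (Fin n) ℝ) :
    ((∑ i, c i • A i) * X).trace = ∑ i, c i * (A i * X).trace := by
  rw [Finset.sum_mul, trace_sum]
  exact Finset.sum_congr rfl fun i _ => by rw [smul_mul_assoc, trace_smul, smul_eq_mul]

/-- Suppose the affine constraints `⟨A_i, X⟩ = b_i` imply `tr X = k` for some `k > 0`.
Assuming strong duality holds and every dual optimal slack matrix `Z*` has `rank Z* ≤ n − 1`,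
the dual SDP `max bᵀy s.t. Z + A*(y) = C, Z ⪰ 0` has the same optimal value as
`min_y −bᵀy + k·λ_max(A*(y) − C)` (i.e. its value is the negative of this minimum). -/
theorem stmt9 {n m : ℕ} (hn : 0 < n) (A : Fin m → Matrix (Fin n) (Fin n) ℝ)
    (b : Fin m → ℝ) (C : Matrix (Fin n) (Fin n) ℝ) (k : ℝ) (hk : 0 < k)
    (hA : ∀ i, (A i).IsHermitian) (hC : C.IsHermitian)
    (htrace : ∀ X : Matrix (Fin n) (Fin n) ℝ, (∀ i, (A i * X).trace = b i) → X.trace = k)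
    (hsd : sSup {r : ℝ | ∃ (y : Fin m → ℝ) (Z : Matrix (Fin n) (Fin n) ℝ),
        Z.PosSemidef ∧ Z + ∑ i, y i • A i = C ∧ r = ∑ i, b i * y i}
      = sInf {r : ℝ | ∃ X : Matrix (Fin n) (Fin n) ℝ,
        X.PosSemidef ∧ (∀ i, (A i * X).trace = b i) ∧ r = (C * X).trace})
    (hrank : ∀ (y : Fin m → ℝ) (Z : Matrix (Fin n) (Fin n) ℝ), Z.PosSemidef →
      Z + ∑ i, y i • A i = C →
      (∀ (y' : Fin m → ℝ) (Z' : Matrix (Fin n) (Fin n) ℝ), Z'.PosSemidef →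
        Z' + ∑ i, y' i • A i = C → ∑ i, b i * y' i ≤ ∑ i, b i * y i) →
      Z.rank ≤ n - 1) :
    sSup {r : ℝ | ∃ (y : Fin m → ℝ) (Z : Matrix (Fin n) (Fin n) ℝ),
        Z.PosSemidef ∧ Z + ∑ i, y i • A i = C ∧ r = ∑ i, b i * y i}
      = -(sInf {r : ℝ | ∃ (y : Fin m → ℝ) (h : ((∑ i, y i • A i) - C).IsHermitian),
        r = -(∑ i, b i * y i) + k * maxEig ((∑ i, y i • A i) - C) h}) := by
  classical
  clear hsd hrank
  have herm : ∀ y : Fin m → ℝ, ((∑ i, y i • A i) - C).IsHermitian :=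
    fun y => (herm_sum_smul A hA y).sub hC
  set L : Fin m → (Matrix (Fin n) (Fin n) ℝ →ₗ[ℝ] ℝ) := fun i =>
    (Matrix.traceLinearMap (Fin n) ℝ ℝ).comp (LinearMap.mulLeft ℝ (A i)) with hLdef
  have hL : ∀ i X, L i X = (A i * X).trace := fun i X => rfl
  by_cases hsolv : ∃ X : Matrix (Fin n) (Fin n) ℝ, ∀ i, (A i * X).trace = b i
  · -- Case A : identity is in the span of the A i
    obtain ⟨X₀, hX₀⟩ := hsolv
    have hk0 : X₀.trace = k := htrace X₀ hX₀
    have hker : ⨅ i, LinearMap.ker (L i) ≤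
        LinearMap.ker (Matrix.traceLinearMap (Fin n) ℝ ℝ) := by
      intro W hW
      simp only [Submodule.mem_iInf, LinearMap.mem_ker] at hW
      have h1 : (X₀ + W).trace = k := htrace _ (fun i => by
        rw [mul_add, trace_add, hX₀ i]
        have h2 := hW i
        rw [hL] at h2
        rw [h2, add_zero])
      rw [trace_add, hk0] at h1
      simp only [LinearMap.mem_ker, Matrix.traceLinearMap_apply]
      linarith
    obtain ⟨c, hc⟩ := (Submodule.mem_span_range_iff_exists_fun ℝ).1 (mem_span_of_iInf_ker_le_ker hker)
    have hcX : ∀ X : Matrix (Fin n) (Fin n) ℝ, ∑ i, c i * (A i * X).trace = X.trace := by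
      intro X
      have := LinearMap.congr_fun hc X
      simpa [hL] using this
    have hcA : ∑ i, c i • A i = 1 := by
      apply trace_eq_of_forall
      intro X
      rw [one_mul, trace_sum_smul_mul, hcX]
    have hcb : ∑ i, c i * b i = k := by
      calc ∑ i, c i * b i = ∑ i, c i * (A i * X₀).trace :=
            Finset.sum_congr rfl fun i _ => by rw [hX₀ i]
        _ = X₀.trace := hcX X₀
        _ = k := hk0
    rw [Real.sInf_def, neg_neg]
    apply csSup_eq_csSup_of_forall_exists_le
    · rintro x ⟨y, Z, hZ, hZeq, rfl⟩
      refine ⟨∑ i, b i * y i - k * maxEig ((∑ i, y i • A i) - C) (herm y), ?_, ?_⟩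
      · rw [Set.mem_neg]
        exact ⟨y, herm y, by ring⟩
      · have hM : (∑ i, y i • A i) - C = -Z := by rw [← hZeq]; abel
        have hle : maxEig ((∑ i, y i • A i) - C) (herm y) ≤ 0 := by
          rw [maxEig_congr hM (herm y) (hM ▸ herm y)]
          exact maxEig_neg_nonpos hn hZ _
        nlinarith
    · rintro x hx
      rw [Set.mem_neg] at hx
      obtain ⟨y, h, hxe⟩ := hx
      set t := maxEig ((∑ i, y i • A i) - C) h with ht
      have hx' : x = ∑ i, b i * y i - k * t := by linarith
      have hsum : ∑ i, (y i - t * c i) • A i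
          = (∑ i, y i • A i) - t • (∑ i, c i • A i) := by
        rw [Finset.smul_sum, ← Finset.sum_sub_distrib]
        exact Finset.sum_congr rfl fun i _ => by rw [sub_smul, smul_smul]
      refine ⟨∑ i, b i * (y i - t * c i),
        ⟨fun i => y i - t * c i, t • (1 : Matrix (Fin n) (Fin n) ℝ) - ((∑ i, y i • A i) - C),
          ?_, ?_, rfl⟩, ?_⟩
      · exact psd_smul_one_sub (herm y) (fun i => eig_le_maxEig (herm y) i)
      · rw [hsum, hcA]
        abel
      · have hval : ∑ i, b i * (y i - t * c i)
            = ∑ i, b i * y i - t * ∑ i, c i * b i := by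
          rw [Finset.mul_sum, ← Finset.sum_sub_distrib]
          exact Finset.sum_congr rfl fun i _ => by ring
        rw [hval, hcb, hx']
        linarith [le_refl (k * t)]
  · -- Case B : there is c with ∑ c i • A i = 0 and ∑ b i * c i = 1
    have hbnot : b ∉ LinearMap.range (LinearMap.pi L) := by
      rintro ⟨X, hX⟩
      exact hsolv ⟨X, fun i => by rw [← hL]; exact congr_fun hX i⟩
    obtain ⟨φ, hφb, hφmap⟩ :=
      Submodule.exists_dual_map_eq_bot_of_notMem hbnot inferInstance
    have hφ0 : ∀ X : Matrix (Fin n) (Fin n) ℝ, φ (fun i => (A i * X).trace) = 0 := by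
      intro X
      have hmem : (fun i => (A i * X).trace) ∈ LinearMap.range (LinearMap.pi L) :=
        ⟨X, by funext i; exact hL i X⟩
      have := Submodule.mem_map_of_mem (f := φ) hmem
      rw [hφmap] at this
      exact (Submodule.mem_bot ℝ).mp this
    set d : Fin m → ℝ := fun i => φ (fun j => if i = j then (1 : ℝ) else 0) with hddef
    have hφsum : ∀ f : Fin m → ℝ, φ f = ∑ i, f i * d i := by
      intro f
      conv_lhs => rw [pi_eq_sum_univ f]
      rw [map_sum]
      exact Finset.sum_congr rfl fun i _ => by rw [_root_.map_smul, smul_eq_mul]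
    have hd0 : ∑ i, d i • A i = 0 := by
      apply trace_eq_of_forall
      intro X
      rw [trace_sum_smul_mul, Matrix.zero_mul, trace_zero]
      calc ∑ i, d i * (A i * X).trace = ∑ i, (A i * X).trace * d i :=
            Finset.sum_congr rfl fun i _ => by ring
        _ = φ (fun i => (A i * X).trace) := (hφsum _).symm
        _ = 0 := hφ0 X
    have hdb : ∑ i, b i * d i = φ b := (hφsum b).symm
    set c : Fin m → ℝ := fun i => (φ b)⁻¹ * d i with hcdef
    have hc0 : ∑ i, c i • A i = 0 := by
      calc ∑ i, c i • A i = (φ b)⁻¹ • ∑ i, d i • A i := by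
            rw [Finset.smul_sum]
            exact Finset.sum_congr rfl fun i _ =>
              show ((φ b)⁻¹ * d i) • A i = (φ b)⁻¹ • d i • A i from (smul_smul _ _ _).symm
        _ = 0 := by rw [hd0, smul_zero]
    have hcb : ∑ i, b i * c i = 1 := by
      calc ∑ i, b i * c i = (φ b)⁻¹ * ∑ i, b i * d i := by
            rw [Finset.mul_sum]
            exact Finset.sum_congr rfl fun i _ =>
              show b i * ((φ b)⁻¹ * d i) = (φ b)⁻¹ * (b i * d i) by ring
        _ = 1 := by rw [hdb, inv_mul_cancel₀ hφb]
    have h2 : sInf {r : ℝ | ∃ (y : Fin m → ℝ) (h : ((∑ i, y i • A i) - C).IsHermitian),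
        r = -(∑ i, b i * y i) + k * maxEig ((∑ i, y i • A i) - C) h} = 0 := by
      apply Real.sInf_of_not_bddBelow
      rintro ⟨u, hu⟩
      set E := maxEig (-C) hC.neg with hE
      have hmemS : ∀ s : ℝ, -s + k * E ∈ {r : ℝ |
          ∃ (y : Fin m → ℝ) (h : ((∑ i, y i • A i) - C).IsHermitian),
          r = -(∑ i, b i * y i) + k * maxEig ((∑ i, y i • A i) - C) h} := by
        intro s
        refine ⟨fun i => s * c i, herm _, ?_⟩
        have hmat : (∑ i, (s * c i) • A i) - C = -C := by
          have : ∑ i, (s * c i) • A i = s • ∑ i, c i • A i := by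
            rw [Finset.smul_sum]
            exact Finset.sum_congr rfl fun i _ => by rw [smul_smul]
          rw [this, hc0, smul_zero, zero_sub]
        have hval : ∑ i, b i * (s * c i) = s := by
          calc ∑ i, b i * (s * c i) = s * ∑ i, b i * c i := by
                rw [Finset.mul_sum]
                exact Finset.sum_congr rfl fun i _ => by ring
            _ = s := by rw [hcb, mul_one]
        rw [hval, maxEig_congr hmat (herm _) (hmat ▸ herm _)]
      have h3 := hu (hmemS (k * E - u + 1))
      linarith
    have h1 : sSup {r : ℝ | ∃ (y : Fin m → ℝ) (Z : Matrix (Fin n) (Fin n) ℝ),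
        Z.PosSemidef ∧ Z + ∑ i, y i • A i = C ∧ r = ∑ i, b i * y i} = 0 := by
      rcases Set.eq_empty_or_nonempty {r : ℝ | ∃ (y : Fin m → ℝ)
          (Z : Matrix (Fin n) (Fin n) ℝ),
          Z.PosSemidef ∧ Z + ∑ i, y i • A i = C ∧ r = ∑ i, b i * y i} with hE | hNE
      · rw [hE, Real.sSup_empty]
      · apply Real.sSup_of_not_bddAbove
        rintro ⟨u, hu⟩
        obtain ⟨x, y, Z, hZ, hZeq, rfl⟩ := hNE
        have hmemD : ∀ s : ℝ, (∑ i, b i * y i) + s ∈ {r : ℝ |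
            ∃ (y : Fin m → ℝ) (Z : Matrix (Fin n) (Fin n) ℝ),
            Z.PosSemidef ∧ Z + ∑ i, y i • A i = C ∧ r = ∑ i, b i * y i} := by
          intro s
          refine ⟨fun i => y i + s * c i, Z, hZ, ?_, ?_⟩
          · have : ∑ i, (y i + s * c i) • A i
                = (∑ i, y i • A i) + s • ∑ i, c i • A i := by
              rw [Finset.smul_sum, ← Finset.sum_add_distrib]
              exact Finset.sum_congr rfl fun i _ => by rw [add_smul, smul_smul]
            rw [this, hc0, smul_zero, add_zero, hZeq]
          · have : ∑ i, b i * (y i + s * c i)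
                = (∑ i, b i * y i) + s * ∑ i, b i * c i := by
              rw [Finset.mul_sum, ← Finset.sum_add_distrib]
              exact Finset.sum_congr rfl fun i _ => by ring
            rw [this, hcb, mul_one]
        have h3 := hu (hmemD (u - (∑ i, b i * y i) + 1))
        linarith
    rw [h1, h2, neg_zero]
end

section
/- Suppose Z + Σᵢ A_i y_i = C with tr(A_i) = 0 for all i. Then every dual feasible Z has constant trace tr(Z) = tr(C), and the penalized primal problem (min ⟨C,X⟩ + ρ·max{λ_max(−X),0} over A(X)=b) simplifies, with k = tr(C), to min ⟨C,X⟩ + k·λ_max(−X) over {X : A(X)=b}, having the same optimal value as the dual SDP with the trace constraint. -/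
open Matrix

namespace SDPAux

variable {n m : ℕ}

attribute [local instance] Matrix.normedAddCommGroup Matrix.normedSpace

lemma trace_nonneg_of_psd {Z : Matrix (Fin n) (Fin n) ℝ} (hZ : Z.PosSemidef) : 0 ≤ Z.trace := by
  rw [Matrix.trace]
  apply Finset.sum_nonneg
  intro i _
  have := hZ.dotProduct_mulVec_nonneg (Pi.single i 1)
  simpa [Matrix.mulVec_single, single_dotProduct, Matrix.diag] using this

open scoped MatrixOrder in
lemma trace_mul_nonneg_of_psd {Z W : Matrix (Fin n) (Fin n) ℝ} (hZ : Z.PosSemidef)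
    (hW : W.PosSemidef) : 0 ≤ (Z * W).trace := by
  have h1 : Z * W = (Z * CFC.sqrt W) * CFC.sqrt W := by
    rw [mul_assoc, CFC.sqrt_mul_sqrt_self W hW.nonneg]
  rw [h1, Matrix.trace_mul_comm, ← mul_assoc]
  have hherm : CFC.sqrt W = (CFC.sqrt W)ᴴ := ((CFC.sqrt_nonneg W).posSemidef.1).symm
  have : ((CFC.sqrt W)ᴴ * Z * CFC.sqrt W).PosSemidef := hZ.conjTranspose_mul_mul_same _
  rw [← hherm] at this
  exact trace_nonneg_of_psd this

lemma maxEig_nonpos {X : Matrix (Fin n) (Fin n) ℝ} (hX : X.PosSemidef) :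
    maxEig (-X) hX.1.neg ≤ 0 := by
  apply Real.iSup_nonpos
  intro i
  rw [Matrix.IsHermitian.eigenvalues_eq]
  have h2 := hX.re_dotProduct_nonneg ⇑(hX.1.neg.eigenvectorBasis i)
  simp only [Matrix.neg_mulVec, dotProduct_neg, map_neg]
  linarith

lemma shift_psd {X : Matrix (Fin n) (Fin n) ℝ} (hX : X.IsHermitian) :
    (X + (maxEig (-X) hX.neg) • (1 : Matrix (Fin n) (Fin n) ℝ)).PosSemidef := by
  set c := maxEig (-X) hX.neg with hc
  set hY : (-X).IsHermitian := hX.neg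
  set U : Matrix (Fin n) (Fin n) ℝ := ↑(hY.eigenvectorUnitary) with hUdef
  have hU : U * star U = 1 := Matrix.mem_unitaryGroup_iff.mp (hY.eigenvectorUnitary).2
  have hd : diagonal (fun i => c - hY.eigenvalues i)
      = c • (1 : Matrix (Fin n) (Fin n) ℝ) - diagonal (RCLike.ofReal ∘ hY.eigenvalues) := by
    ext i j
    by_cases h : i = j <;>
      simp [Matrix.diagonal_apply, h, Matrix.one_apply, Matrix.sub_apply]
  have key : X + c • (1 : Matrix (Fin n) (Fin n) ℝ)
      = U * diagonal (fun i => c - hY.eigenvalues i) * star U := by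
    rw [hd, mul_sub, sub_mul, mul_smul_comm, smul_mul_assoc, mul_one, hU, hUdef, ← Unitary.conjStarAlgAut_apply (S := ℝ), ← hY.spectral_theorem, sub_neg_eq_add, add_comm]
  rw [key]
  have hdiagpsd : (diagonal (fun i => c - hY.eigenvalues i)).PosSemidef := by
    apply Matrix.PosSemidef.diagonal
    intro i
    simp only [Pi.zero_apply, sub_nonneg]
    exact le_ciSup (Set.Finite.bddAbove (Set.finite_range _)) i
  have := hdiagpsd.mul_mul_conjTranspose_same U
  simpa [Matrix.star_eq_conjTranspose] using this

lemma psd_smul {X : Matrix (Fin n) (Fin n) ℝ} (hX : X.PosSemidef) {c : ℝ} (hc : 0 ≤ c) :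
    (c • X).PosSemidef := by
  refine .of_dotProduct_mulVec_nonneg ?_ ?_
  · show (c • X)ᴴ = c • X
    rw [Matrix.conjTranspose_smul, star_trivial, hX.1]
  · intro x
    have := hX.dotProduct_mulVec_nonneg x
    rw [Matrix.smul_mulVec, dotProduct_smul, smul_eq_mul]
    positivity

lemma vecMulVec_psd (v : Fin n → ℝ) : (vecMulVec v v).PosSemidef := by
  refine .of_dotProduct_mulVec_nonneg ?_ ?_
  · ext i j; simp [Matrix.vecMulVec_apply, Matrix.conjTranspose_apply, mul_comm]
  · intro x
    have : (vecMulVec v v) *ᵥ x = (v ⬝ᵥ x) • v := by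
      ext i
      simp only [Matrix.vecMulVec_apply, Matrix.mulVec, dotProduct, Pi.smul_apply,
        smul_eq_mul, Finset.sum_mul]
      exact Finset.sum_congr rfl (by intros; ring)
    rw [this]
    simp only [dotProduct_smul, smul_eq_mul, star_trivial]
    have : x ⬝ᵥ v = v ⬝ᵥ x := dotProduct_comm x v
    rw [this]
    exact mul_self_nonneg _
  
lemma trace_mul_vecMulVec (Z : Matrix (Fin n) (Fin n) ℝ) (v : Fin n → ℝ) :
    (Z * vecMulVec v v).trace = v ⬝ᵥ Z *ᵥ v := by
  simp only [Matrix.trace, Matrix.diag, Matrix.mul_apply, Matrix.vecMulVec_apply,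
    dotProduct, Matrix.mulVec]
  refine Finset.sum_congr rfl fun i _ => ?_
  rw [Finset.mul_sum]
  exact Finset.sum_congr rfl (by intros; ring)

lemma trace_sum_smul_mul (m : ℕ) (y : Fin m → ℝ) (A : Fin m → Matrix (Fin n) (Fin n) ℝ)
    (X : Matrix (Fin n) (Fin n) ℝ) :
    ((∑ i, y i • A i) * X).trace = ∑ i, y i * ((A i) * X).trace := by
  rw [Finset.sum_mul, Matrix.trace_sum]
  congr 1; ext i
  rw [Matrix.smul_mul, Matrix.trace_smul, smul_eq_mul]

lemma trace_mul_add_smul_one (Z X : Matrix (Fin n) (Fin n) ℝ) (c : ℝ) :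
    (Z * (X + c • 1)).trace = (Z * X).trace + c * Z.trace := by
  rw [mul_add, Matrix.trace_add, mul_smul_comm, mul_one, Matrix.trace_smul, smul_eq_mul]

lemma zero_linear (α β γ : ℝ) (h : ∀ s : ℝ, α ≤ β + s * γ) : γ = 0 := by
  by_contra hγ
  have := h ((α - β - 1)/γ)
  rw [div_mul_cancel₀ _ hγ] at this
  linarith

def sym (n : ℕ) : Submodule ℝ (Matrix (Fin n) (Fin n) ℝ) where
  carrier := {X | X.IsHermitian}
  add_mem' := fun ha hb => ha.add hb
  zero_mem' := Matrix.isHermitian_zero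
  smul_mem' := fun c X h => by
    show (c • X)ᴴ = c • X
    rw [Matrix.conjTranspose_smul, star_trivial]
    exact congrArg _ h

lemma quad_bound (Δ : Matrix (Fin n) (Fin n) ℝ) (v : Fin n → ℝ) (hv : ‖v‖ ≤ 1) :
    |v ⬝ᵥ Δ *ᵥ v| ≤ (n : ℝ)^2 * ‖Δ‖ := by
  have hvi : ∀ i, |v i| ≤ 1 := by
    intro i
    calc |v i| = ‖v i‖ := (Real.norm_eq_abs _).symm
      _ ≤ ‖v‖ := norm_le_pi_norm v i
      _ ≤ 1 := hv
  have hΔ : ∀ i j, |Δ i j| ≤ ‖Δ‖ := by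
    intro i j
    calc |Δ i j| = ‖Δ i j‖ := (Real.norm_eq_abs _).symm
      _ ≤ ‖Δ‖ := Matrix.norm_entry_le_entrywise_sup_norm Δ
  have hnn : (0:ℝ) ≤ ‖Δ‖ := norm_nonneg _
  calc |v ⬝ᵥ Δ *ᵥ v| ≤ ∑ i, |v i * (Δ *ᵥ v) i| := Finset.abs_sum_le_sum_abs _ _
    _ ≤ ∑ _i : Fin n, (n : ℝ) * ‖Δ‖ := by
        refine Finset.sum_le_sum fun i _ => ?_
        rw [abs_mul]
        calc |v i| * |(Δ *ᵥ v) i| ≤ 1 * |(Δ *ᵥ v) i| := by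
              gcongr; exact hvi i
          _ = |∑ j, Δ i j * v j| := by rw [one_mul]; rfl
          _ ≤ ∑ j, |Δ i j * v j| := Finset.abs_sum_le_sum_abs _ _
          _ ≤ ∑ _j : Fin n, ‖Δ‖ * 1 := by
              refine Finset.sum_le_sum fun j _ => ?_
              rw [abs_mul]
              exact mul_le_mul (hΔ i j) (hvi j) (abs_nonneg _) hnn
          _ = (n : ℝ) * ‖Δ‖ := by simp [mul_comm]
    _ = (n : ℝ)^2 * ‖Δ‖ := by simp; ring
  
lemma posdef_near (hn : 0 < n) {X₀ : Matrix (Fin n) (Fin n) ℝ} (h₀ : X₀.PosDef) :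
    ∃ ε > 0, ∀ X : Matrix (Fin n) (Fin n) ℝ, X.IsHermitian → ‖X - X₀‖ < ε → X.PosDef := by
  have hS : IsCompact (Metric.sphere (0 : Fin n → ℝ) 1) := isCompact_sphere _ _
  have hSne : (Metric.sphere (0 : Fin n → ℝ) 1).Nonempty := by
    refine ⟨Pi.single ⟨0, hn⟩ 1, ?_⟩
    rw [mem_sphere_zero_iff_norm, Pi.norm_single]
    simp
  set φ : (Fin n → ℝ) → ℝ := fun v => ∑ i, v i * ∑ j, X₀ i j * v j with hφ
  have hφq : ∀ v, φ v = v ⬝ᵥ X₀ *ᵥ v := by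
    intro v; simp [hφ, dotProduct, Matrix.mulVec]
  have hφc : Continuous φ := by
    exact continuous_finset_sum _ fun i _ => (continuous_apply i).mul
      (continuous_finset_sum _ fun j _ => continuous_const.mul (continuous_apply j))
  obtain ⟨v₀, hv₀S, hmin⟩ := hS.exists_isMinOn hSne hφc.continuousOn
  set c := φ v₀ with hc
  have hcpos : 0 < c := by
    rw [hc, hφq]
    refine h₀.dotProduct_mulVec_pos (x := v₀) ?_
    intro h0
    rw [mem_sphere_zero_iff_norm] at hv₀S
    rw [h0] at hv₀S; simp at hv₀S
  refine ⟨c / ((n:ℝ)^2 + 1), by positivity, ?_⟩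
  intro X hX hXd
  refine .of_dotProduct_mulVec_pos hX ?_
  intro x hx
  set a := ‖x‖⁻¹ with ha
  have hxn : (0:ℝ) < ‖x‖ := norm_pos_iff.mpr hx
  have hapos : 0 < a := by rw [ha]; positivity
  set v := a • x with hv
  have hvn : ‖v‖ = 1 := by
    rw [hv, norm_smul, ha]
    simp [Real.norm_eq_abs, abs_of_pos hapos, inv_mul_cancel₀ (ne_of_gt hxn), ha]
  have hvS : v ∈ Metric.sphere (0 : Fin n → ℝ) 1 := by
    rwa [mem_sphere_zero_iff_norm]
  have hsplit : v ⬝ᵥ X *ᵥ v = v ⬝ᵥ X₀ *ᵥ v + v ⬝ᵥ (X - X₀) *ᵥ v := by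
    rw [Matrix.sub_mulVec, dotProduct_sub]
    ring
  have h1 : c ≤ v ⬝ᵥ X₀ *ᵥ v := by
    rw [← hφq]
    exact hmin hvS
  have h2 : |v ⬝ᵥ (X - X₀) *ᵥ v| ≤ (n:ℝ)^2 * ‖X - X₀‖ := quad_bound _ _ (le_of_eq hvn)
  have h3 : (n:ℝ)^2 * ‖X - X₀‖ < c := by
    have hb : (n:ℝ)^2 * ‖X - X₀‖ ≤ ((n:ℝ)^2+1) * ‖X - X₀‖ := by
      have := norm_nonneg (X - X₀); nlinarith
    have : ((n:ℝ)^2+1) * ‖X - X₀‖ < ((n:ℝ)^2+1) * (c / ((n:ℝ)^2 + 1)) := by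
      have hpos : (0:ℝ) < (n:ℝ)^2+1 := by positivity
      exact mul_lt_mul_of_pos_left hXd hpos
    have hone : ((n:ℝ)^2+1) * (c / ((n:ℝ)^2 + 1)) = c := by
      field_simp
    linarith
  have hqv : 0 < v ⬝ᵥ X *ᵥ v := by
    have := abs_le.mp h2
    rw [hsplit]
    linarith
  have hxv : x ⬝ᵥ X *ᵥ x = (a⁻¹)^2 * (v ⬝ᵥ X *ᵥ v) := by
    rw [hv, Matrix.mulVec_smul, dotProduct_smul, smul_dotProduct]
    simp only [smul_eq_mul]
    field_simp
  have : 0 < x ⬝ᵥ X *ᵥ x := by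
    rw [hxv]
    have : (0:ℝ) < (a⁻¹)^2 := by positivity
    positivity
  simpa using this

set_option maxHeartbeats 2000000 in
theorem strong_dual (hn : 0 < n) (A : Fin m → Matrix (Fin n) (Fin n) ℝ)
    (b : Fin m → ℝ) (C : Matrix (Fin n) (Fin n) ℝ)
    (hA : ∀ i, (A i).IsHermitian) (hC : C.IsHermitian)
    (X₀ : Matrix (Fin n) (Fin n) ℝ) (hX₀ : X₀.PosDef) (hfeas : ∀ i, (A i * X₀).trace = b i)
    (pstar : ℝ)
    (hlb : ∀ X : Matrix (Fin n) (Fin n) ℝ, X.PosDef → (∀ i, (A i * X).trace = b i) →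
      pstar ≤ (C * X).trace) :
    ∃ (y : Fin m → ℝ) (Z : Matrix (Fin n) (Fin n) ℝ),
      Z.PosSemidef ∧ Z + ∑ i, y i • A i = C ∧ pstar ≤ ∑ i, b i * y i := by
  classical
  set E := (sym n) × ℝ
  -- the open convex set
  set 𝒞 : Set E := {p | (p.1.val : Matrix (Fin n) (Fin n) ℝ).PosDef ∧
    (C * p.1.val).trace < p.2} with h𝒞
  set 𝒟 : Set E := {p | (∀ i, ((A i) * p.1.val).trace = b i) ∧ p.2 = pstar} with h𝒟
  have hX₀mem : X₀ ∈ sym n := hX₀.1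
  set X₀' : sym n := ⟨X₀, hX₀mem⟩ with hX₀'
  -- continuity of the trace functional
  have trace_lin : ∀ (M : Matrix (Fin n) (Fin n) ℝ), ∃ φ : sym n →ₗ[ℝ] ℝ,
      ∀ X : sym n, φ X = (M * X.val).trace := by
    intro M
    refine ⟨{ toFun := fun X => (M * X.val).trace,
              map_add' := ?_, map_smul' := ?_ }, fun X => rfl⟩
    · intro X Y
      simp [Submodule.coe_add, mul_add, Matrix.trace_add]
    · intro c X
      simp [Submodule.coe_smul, Matrix.mul_smul, Matrix.trace_smul]
  have hopen : IsOpen 𝒞 := by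
    obtain ⟨ψ, hψ⟩ := trace_lin C
    have hψc : Continuous ψ := ψ.continuous_of_finiteDimensional
    have h2o : IsOpen {p : E | (C * p.1.val).trace < p.2} := by
      have hcont : Continuous fun p : E => p.2 - ψ p.1 :=
        continuous_snd.sub (hψc.comp continuous_fst)
      have ho := (isOpen_Ioi (a := (0:ℝ))).preimage hcont
      convert ho using 1
      ext p
      simp only [Set.mem_setOf_eq, Set.mem_preimage, Set.mem_Ioi, sub_pos, hψ]
    have h1o : IsOpen {p : E | (p.1.val).PosDef} := by
      refine Metric.isOpen_iff.mpr ?_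
      rintro p hp
      obtain ⟨ε, hε, hball⟩ := posdef_near hn hp
      refine ⟨ε, hε, ?_⟩
      intro q hq
      refine hball _ q.1.2 ?_
      have hd1 : dist q.1 p.1 ≤ dist q p := by
        rw [Prod.dist_eq]
        exact le_max_left _ _
      have hd2 : dist q.1 p.1 = ‖q.1.val - p.1.val‖ := by
        rw [dist_eq_norm]
        rfl
      rw [Metric.mem_ball] at hq
      calc ‖q.1.val - p.1.val‖ = dist q.1 p.1 := hd2.symm
        _ ≤ dist q p := hd1
        _ < ε := hq
    have : 𝒞 = {p : E | (p.1.val).PosDef} ∩ {p : E | (C * p.1.val).trace < p.2} := by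
      rw [h𝒞]
      rfl
    rw [this]
    exact h1o.inter h2o
  have hcomb : ∀ (u v a bb : ℝ), 0 ≤ a → 0 ≤ bb → a + bb = 1 → 0 < u → 0 < v →
      0 < a * u + bb * v := by
    intro u v a bb ha hb hab hu hv
    rcases eq_or_lt_of_le ha with h | h
    · rw [← h]
      have : bb = 1 := by linarith
      rw [this]
      linarith
    · nlinarith
  have hconv𝒞 : Convex ℝ 𝒞 := by
    rintro p ⟨hp1, hp2⟩ q ⟨hq1, hq2⟩ a bb ha hb hab
    have hval : ((a • p + bb • q : E).1).val = a • p.1.val + bb • q.1.val := rfl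
    have hval2 : (a • p + bb • q : E).2 = a * p.2 + bb * q.2 := rfl
    constructor
    · show ((a • p + bb • q : E).1.val).PosDef
      refine .of_dotProduct_mulVec_pos ((a • p + bb • q : E).1).2 ?_
      intro x hx
      have e : ((a • p + bb • q : E).1.val) *ᵥ x
          = a • (p.1.val *ᵥ x) + bb • (q.1.val *ᵥ x) := by
        rw [hval, Matrix.add_mulVec, Matrix.smul_mulVec, Matrix.smul_mulVec]
      rw [e, dotProduct_add, dotProduct_smul, dotProduct_smul,
        smul_eq_mul, smul_eq_mul]
      exact hcomb _ _ _ _ ha hb hab (hp1.dotProduct_mulVec_pos hx) (hq1.dotProduct_mulVec_pos hx)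
    · show (C * (a • p + bb • q : E).1.val).trace < (a • p + bb • q : E).2
      rw [hval, hval2, mul_add, Matrix.trace_add, Matrix.mul_smul, Matrix.mul_smul,
        Matrix.trace_smul, Matrix.trace_smul, smul_eq_mul, smul_eq_mul]
      rcases eq_or_lt_of_le ha with h | h
      · have hbb : bb = 1 := by linarith
        rw [← h, hbb]
        simpa using hq2
      · rcases eq_or_lt_of_le hb with h' | h'
        · have haa : a = 1 := by linarith
          rw [← h', haa]
          simpa using hp2
        · have t1 : a * (C * p.1.val).trace < a * p.2 := by
            exact mul_lt_mul_of_pos_left hp2 h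
          have t2 : bb * (C * q.1.val).trace < bb * q.2 := by
            exact mul_lt_mul_of_pos_left hq2 h'
          linarith
  have hconv𝒟 : Convex ℝ 𝒟 := by
    rintro p ⟨hp1, hp2⟩ q ⟨hq1, hq2⟩ a bb ha hb hab
    have hval : ((a • p + bb • q : E).1).val = a • p.1.val + bb • q.1.val := rfl
    have hval2 : (a • p + bb • q : E).2 = a * p.2 + bb * q.2 := rfl
    constructor
    · intro i
      show ((A i) * (a • p + bb • q : E).1.val).trace = b i
      rw [hval, mul_add, Matrix.trace_add, Matrix.mul_smul, Matrix.mul_smul,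
        Matrix.trace_smul, Matrix.trace_smul, smul_eq_mul, smul_eq_mul, hp1 i, hq1 i]
      rw [← add_mul, hab, one_mul]
    · show (a • p + bb • q : E).2 = pstar
      rw [hval2, hp2, hq2, ← add_mul, hab, one_mul]
  have hdisj : Disjoint 𝒞 𝒟 := by
    rw [Set.disjoint_left]
    rintro p ⟨hPD, hlt⟩ ⟨hfs, hp2⟩
    have := hlb _ hPD hfs
    rw [hp2] at hlt
    linarith
  obtain ⟨f, α, hfC, hfD⟩ := geometric_hahn_banach_open hconv𝒞 hopen hconv𝒟 hdisj
  set μ : ℝ := f (0, 1) with hμ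
  set gl : sym n →ₗ[ℝ] ℝ := f.toLinearMap.comp (LinearMap.inl ℝ (sym n) ℝ) with hgl
  have hsplit : ∀ (X : sym n) (t : ℝ), f (X, t) = gl X + t * μ := by
    intro X t
    have : (X, t) = (X, (0:ℝ)) + t • ((0 : sym n), (1:ℝ)) := by
      simp [Prod.ext_iff]
    rw [this, map_add, _root_.map_smul]
    simp only [hgl, hμ, smul_eq_mul, LinearMap.comp_apply, LinearMap.inl_apply,
      ContinuousLinearMap.coe_coe]
    have h9 : ((X, (0:ℝ)) : E) = (LinearMap.inl ℝ (sym n) ℝ) X := rfl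
    rw [h9]
    try ring
  -- D side inequality
  have hDside : ∀ X : sym n, (∀ i, ((A i) * X.val).trace = b i) → α ≤ gl X + pstar * μ := by
    intro X hXf
    have := hfD (X, pstar) ⟨hXf, rfl⟩
    rwa [hsplit] at this
  have hCside : ∀ X : sym n, (X.val).PosDef → ∀ t, (C * X.val).trace < t → gl X + t * μ < α := by
    intro X hXpd t ht
    have := hfC (X, t) ⟨hXpd, ht⟩
    rwa [hsplit] at this
  -- closure to PSD matrices
  have hone : (1 : Matrix (Fin n) (Fin n) ℝ) ∈ sym n := Matrix.isHermitian_one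
  set one' : sym n := ⟨(1 : Matrix (Fin n) (Fin n) ℝ), hone⟩ with hone'
  have hclosure : ∀ X : sym n, (X.val).PosSemidef → gl X + (C * X.val).trace * μ ≤ α := by
    intro X hXpsd
    set K := gl one' + ((C * (1:Matrix (Fin n) (Fin n) ℝ)).trace) * μ + μ with hK
    have step : ∀ ε : ℝ, 0 < ε → gl X + (C * X.val).trace * μ + ε * K < α := by
      intro ε hε
      have hpdval : ((X + ε • one' : sym n).val) = X.val + ε • (1:Matrix (Fin n) (Fin n) ℝ) := rfl
      have hpd : ((X + ε • one' : sym n).val).PosDef := by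
        rw [hpdval]
        refine Matrix.PosDef.posSemidef_add hXpsd ?_
        have : (ε • (1:Matrix (Fin n) (Fin n) ℝ)) = Matrix.diagonal (fun _ => ε) := by
          ext i j
          by_cases h : i = j <;> simp [Matrix.diagonal_apply, h, Matrix.one_apply]
        rw [this]
        exact Matrix.posDef_diagonal_iff.mpr (fun _ => hε)
      have ht : (C * (X + ε • one' : sym n).val).trace
          < (C * (X + ε • one' : sym n).val).trace + ε := by linarith
      have hlt := hCside _ hpd _ ht
      have e1 : gl (X + ε • one') = gl X + ε * gl one' := by
        rw [map_add, _root_.map_smul, smul_eq_mul]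
      have e2 : (C * (X + ε • one' : sym n).val).trace
          = (C * X.val).trace + ε * (C * (1:Matrix (Fin n) (Fin n) ℝ)).trace := by
        rw [hpdval, mul_add, Matrix.trace_add, Matrix.mul_smul, Matrix.trace_smul, smul_eq_mul]
      rw [e1, e2] at hlt
      have : gl X + (C * X.val).trace * μ + ε * K
          = gl X + ε * gl one'
            + ((C * X.val).trace + ε * (C * (1:Matrix (Fin n) (Fin n) ℝ)).trace + ε) * μ := by
        rw [hK]; ring
      rw [this]
      exact hlt
    by_contra hcon
    push_neg at hcon
    set L := gl X + (C * X.val).trace * μ with hL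
    set ε := (L - α) / (|K| + 1) with hεdef
    have hKb : (0:ℝ) < |K| + 1 := by positivity
    have hε : 0 < ε := by
      apply div_pos _ hKb
      linarith
    have h1 := step ε hε
    have h2 : -(ε * (|K|+1)) ≤ ε * K := by
      have hKK : -(|K|+1) ≤ K := by
        have := neg_abs_le K
        linarith
      nlinarith
    have h3 : ε * (|K|+1) = L - α := by
      rw [hεdef]
      field_simp
    linarith
  -- the constraint map
  choose Φ hΦ using trace_lin
  set T : sym n →ₗ[ℝ] (Fin m → ℝ) := LinearMap.pi (fun i => Φ (A i)) with hT
  have hTapp : ∀ (X : sym n) (i : Fin m), T X i = ((A i) * X.val).trace := by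
    intro X i
    rw [hT, LinearMap.pi_apply, hΦ]
  -- gl vanishes on ker T
  have hker : LinearMap.ker T ≤ LinearMap.ker gl := by
    intro V hV
    have hVf : ∀ i, ((A i) * V.val).trace = 0 := by
      intro i
      have h0 : T V = 0 := hV
      have := congrFun h0 i
      rwa [hTapp] at this
    have hbound : ∀ s : ℝ, α ≤ (gl X₀' + pstar * μ) + s * gl V := by
      intro s
      have hfs : ∀ i, ((A i) * ((X₀' + s • V : sym n).val)).trace = b i := by
        intro i
        have hval : (X₀' + s • V : sym n).val = X₀ + s • V.val := rfl
        rw [hval, mul_add, Matrix.trace_add, Matrix.mul_smul, Matrix.trace_smul, smul_eq_mul,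
          hVf i, hfeas i]
        ring
      have := hDside _ hfs
      rw [map_add, _root_.map_smul, smul_eq_mul] at this
      linarith
    exact LinearMap.mem_ker.mpr (zero_linear α (gl X₀' + pstar * μ) (gl V) hbound)
  -- factor gl through T
  set glq := (LinearMap.ker T).liftQ gl hker with hglq
  set e := T.quotKerEquivRange with he
  obtain ⟨h, hh⟩ := LinearMap.exists_extend (glq.comp e.symm.toLinearMap)
  have hfact : ∀ X : sym n, gl X = h (T X) := by
    intro X
    have h2 : e (Submodule.Quotient.mk X) = ⟨T X, LinearMap.mem_range_self T X⟩ :=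
      Subtype.ext (T.quotKerEquivRange_apply_mk X)
    have h3 : e.symm ⟨T X, LinearMap.mem_range_self T X⟩ = Submodule.Quotient.mk X := by
      rw [← h2, LinearEquiv.symm_apply_apply]
    have h5 := LinearMap.congr_fun hh ⟨T X, LinearMap.mem_range_self T X⟩
    simp only [LinearMap.comp_apply, Submodule.subtype_apply, LinearEquiv.coe_toLinearMap] at h5
    rw [h3, hglq, Submodule.liftQ_apply] at h5
    exact h5.symm
  set y0 : Fin m → ℝ := fun i => h (Pi.single i 1) with hy0
  have hglX : ∀ X : sym n, gl X = ∑ i, ((A i) * X.val).trace * y0 i := by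
    intro X
    rw [hfact X, LinearMap.pi_apply_eq_sum_univ]
    refine Finset.sum_congr rfl fun i _ => ?_
    rw [hTapp, smul_eq_mul]
    congr 1
    rw [hy0]
    congr 1
    ext j
    simp [Pi.single_apply, eq_comm]
  -- μ is negative
  have hX₀feas' : ∀ i, ((A i) * X₀'.val).trace = b i := fun i => hfeas i
  have hμneg : μ < 0 := by
    have hD := hDside X₀' hX₀feas'
    by_contra hμn
    push_neg at hμn
    set t := max pstar ((C * X₀'.val).trace + 1) with htdef
    have ht : (C * X₀'.val).trace < t := lt_of_lt_of_le (by linarith) (le_max_right _ _)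
    have hC1 := hCside X₀' hX₀ t ht
    have hts : pstar ≤ t := le_max_left _ _
    have : pstar * μ ≤ t * μ := mul_le_mul_of_nonneg_right hts hμn
    linarith
  have hμ' : 0 < -μ := by linarith
  have hμne : μ ≠ 0 := by linarith
  -- cone inequality
  have hcone : ∀ X : Matrix (Fin n) (Fin n) ℝ, X.PosSemidef →
      (∑ i, ((A i) * X).trace * y0 i) + (C * X).trace * μ ≤ 0 := by
    intro X hXp
    set W := (∑ i, ((A i) * X).trace * y0 i) + (C * X).trace * μ with hW
    have hsc : ∀ s : ℝ, 0 < s → s * W ≤ α := by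
      intro s hs
      have hpsd : (s • X).PosSemidef := psd_smul hXp hs.le
      have hmem : s • X ∈ sym n := hpsd.1
      have hc := hclosure ⟨s • X, hmem⟩ hpsd
      rw [hglX] at hc
      have hval : ((⟨s • X, hmem⟩ : sym n)).val = s • X := rfl
      rw [hval] at hc
      have e1 : ∀ i, ((A i) * (s • X)).trace = s * ((A i) * X).trace := by
        intro i
        rw [Matrix.mul_smul, Matrix.trace_smul, smul_eq_mul]
      have e2 : (C * (s • X)).trace = s * (C * X).trace := by
        rw [Matrix.mul_smul, Matrix.trace_smul, smul_eq_mul]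
      calc s * W = (∑ i, ((A i) * (s • X)).trace * y0 i) + (C * (s • X)).trace * μ := by
            rw [hW, mul_add, Finset.mul_sum]
            congr 1
            · exact Finset.sum_congr rfl fun i _ => by rw [e1 i]; ring
            · rw [e2]; ring
        _ ≤ α := hc
    by_contra hpos
    push_neg at hpos
    have hsW := hsc ((|α| + 1) / W) (by positivity)
    have : (|α| + 1) / W * W = |α| + 1 := by
      field_simp
    rw [this] at hsW
    have := le_abs_self α
    linarith
  -- construct the dual solution
  set yhat : Fin m → ℝ := fun i => y0 i / (-μ) with hyhat
  set Z := C - ∑ i, yhat i • A i with hZdef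
  have hZfeas : Z + ∑ i, yhat i • A i = C := by
    rw [hZdef, sub_add_cancel]
  have hZherm : Z.IsHermitian := by
    have hsum : (∑ i, yhat i • A i)ᴴ = ∑ i, yhat i • A i := by
      rw [Matrix.conjTranspose_sum]
      exact Finset.sum_congr rfl fun i _ => by
        rw [Matrix.conjTranspose_smul, star_trivial, (hA i).eq]
    exact hC.sub hsum
  have htrZ : ∀ X : Matrix (Fin n) (Fin n) ℝ, X.PosSemidef → 0 ≤ (Z * X).trace := by
    intro X hXp
    have h1 := hcone X hXp
    have h2 : (Z * X).trace = (C * X).trace - ∑ i, yhat i * ((A i) * X).trace := by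
      rw [hZdef, Matrix.sub_mul, Matrix.trace_sub, trace_sum_smul_mul]
    rw [h2]
    have h3 : (∑ i, ((A i) * X).trace * y0 i + (C * X).trace * μ) / (-μ) ≤ 0 :=
      div_nonpos_of_nonpos_of_nonneg h1 hμ'.le
    have h4 : (∑ i, ((A i) * X).trace * y0 i + (C * X).trace * μ) / (-μ)
        = (∑ i, yhat i * ((A i) * X).trace) - (C * X).trace := by
      rw [add_div, Finset.sum_div]
      congr 1
      · refine Finset.sum_congr rfl fun i _ => ?_
        rw [hyhat]
        field_simp
      · rw [mul_div_assoc, div_neg, div_self hμne]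
        ring
    rw [h4] at h3
    linarith
  have hZpsd : Z.PosSemidef := by
    refine .of_dotProduct_mulVec_nonneg hZherm fun x => ?_
    have := htrZ (vecMulVec x x) (vecMulVec_psd x)
    rw [trace_mul_vecMulVec] at this
    simpa using this
  -- value bound
  have h0α : (0:ℝ) ≤ α := by
    have hzz := hclosure 0 (by
      show (0 : Matrix (Fin n) (Fin n) ℝ).PosSemidef
      exact Matrix.PosSemidef.zero)
    have : ((0 : sym n)).val = (0 : Matrix (Fin n) (Fin n) ℝ) := rfl
    rw [this, mul_zero, Matrix.trace_zero, map_zero] at hzz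
    linarith
  have hval : pstar ≤ ∑ i, b i * yhat i := by
    have hD := hDside X₀' hX₀feas'
    rw [hglX] at hD
    have hDb : α ≤ (∑ i, b i * y0 i) + pstar * μ := by
      have : ∑ i, ((A i) * X₀'.val).trace * y0 i = ∑ i, b i * y0 i :=
        Finset.sum_congr rfl fun i _ => by rw [hX₀feas' i]
      linarith [hD, this.ge, this.le]
    have hnum : pstar * (-μ) ≤ ∑ i, b i * y0 i := by
      linarith
    have hdivle : pstar ≤ (∑ i, b i * y0 i) / (-μ) := (le_div_iff₀ hμ').mpr hnum
    have heq : (∑ i, b i * y0 i) / (-μ) = ∑ i, b i * yhat i := by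
      rw [Finset.sum_div]
      exact Finset.sum_congr rfl fun i _ => by rw [hyhat, mul_div_assoc]
    rwa [heq] at hdivle
  exact ⟨yhat, Z, hZpsd, hZfeas, hval⟩


end SDPAux

set_option maxHeartbeats 1000000 in
/-- If `tr(A_i) = 0` for all `i`, then every dual feasible `Z` (with `Z + A*(y) = C`) has
constant trace `tr Z = tr C`, and (under strict feasibility) the penalized primal problem
simplifies with `k = tr C` to `min ⟨C,X⟩ + k·λ_max(−X)` over `{X | A(X) = b}`, whose optimal
value equals the optimal value of the dual SDP. -/
theorem stmt10 {n m : ℕ} (hn : 0 < n) (A : Fin m → Matrix (Fin n) (Fin n) ℝ)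
    (b : Fin m → ℝ) (C : Matrix (Fin n) (Fin n) ℝ)
    (hA : ∀ i, (A i).IsHermitian) (hC : C.IsHermitian)
    (htrace : ∀ i, (A i).trace = 0)
    (hPstrict : ∃ X : Matrix (Fin n) (Fin n) ℝ, X.PosDef ∧ ∀ i, (A i * X).trace = b i)
    (hDstrict : ∃ (y : Fin m → ℝ) (Z : Matrix (Fin n) (Fin n) ℝ),
      Z.PosDef ∧ Z + ∑ i, y i • A i = C) :
    (∀ (y : Fin m → ℝ) (Z : Matrix (Fin n) (Fin n) ℝ),
      Z + ∑ i, y i • A i = C → Z.trace = C.trace) ∧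
    sInf {r : ℝ | ∃ (X : Matrix (Fin n) (Fin n) ℝ) (hX : X.IsHermitian),
        (∀ i, (A i * X).trace = b i) ∧ r = (C * X).trace + C.trace * maxEig (-X) hX.neg}
      = sSup {r : ℝ | ∃ (y : Fin m → ℝ) (Z : Matrix (Fin n) (Fin n) ℝ),
        Z.PosSemidef ∧ Z + ∑ i, y i • A i = C ∧ r = ∑ i, b i * y i} := by
  classical
  obtain ⟨X₀, hX₀pd, hX₀feas⟩ := hPstrict
  obtain ⟨y₀, Z₀, hZ₀pd, hZ₀eq⟩ := hDstrict
  have part1 : ∀ (y : Fin m → ℝ) (Z : Matrix (Fin n) (Fin n) ℝ),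
      Z + ∑ i, y i • A i = C → Z.trace = C.trace := by
    intro y Z hZ
    have hZ' : Z = C - ∑ i, y i • A i := eq_sub_of_add_eq hZ
    rw [hZ', Matrix.trace_sub, Matrix.trace_sum]
    have : ∀ i ∈ Finset.univ, (y i • A i).trace = 0 := by
      intro i _
      rw [Matrix.trace_smul, htrace i, smul_zero]
    rw [Finset.sum_congr rfl this]
    simp
  refine ⟨part1, ?_⟩
  set P := {r : ℝ | ∃ (X : Matrix (Fin n) (Fin n) ℝ) (hX : X.IsHermitian),
      (∀ i, (A i * X).trace = b i) ∧ r = (C * X).trace + C.trace * maxEig (-X) hX.neg} with hP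
  set D := {r : ℝ | ∃ (y : Fin m → ℝ) (Z : Matrix (Fin n) (Fin n) ℝ),
      Z.PosSemidef ∧ Z + ∑ i, y i • A i = C ∧ r = ∑ i, b i * y i} with hD
  have htrC : (0:ℝ) ≤ C.trace := by
    rw [← part1 y₀ Z₀ hZ₀eq]
    exact SDPAux.trace_nonneg_of_psd hZ₀pd.posSemidef
  -- weak duality
  have weak : ∀ r ∈ P, ∀ q ∈ D, q ≤ r := by
    rintro r ⟨X, hX, hfeas, rfl⟩ q ⟨y, Z, hZpsd, hZeq, rfl⟩
    set c := maxEig (-X) hX.neg with hc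
    have h1 : 0 ≤ (Z * (X + c • 1)).trace :=
      SDPAux.trace_mul_nonneg_of_psd hZpsd (SDPAux.shift_psd hX)
    rw [SDPAux.trace_mul_add_smul_one] at h1
    have htrZ : Z.trace = C.trace := part1 y Z hZeq
    have h2 : ∑ i, b i * y i = ((∑ i, y i • A i) * X).trace := by
      rw [SDPAux.trace_sum_smul_mul]
      exact Finset.sum_congr rfl fun i _ => by rw [hfeas i, mul_comm]
    have h3 : (∑ i, y i • A i) = C - Z := by
      rw [← hZeq]
      abel
    rw [h3, Matrix.sub_mul, Matrix.trace_sub] at h2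
    rw [htrZ] at h1
    rw [h2]
    linarith
  have Pne : P.Nonempty :=
    ⟨_, X₀, hX₀pd.1, hX₀feas, rfl⟩
  have Dne : D.Nonempty :=
    ⟨_, y₀, Z₀, hZ₀pd.posSemidef, hZ₀eq, rfl⟩
  obtain ⟨r₀, hr₀⟩ := Pne
  obtain ⟨q₀, hq₀⟩ := Dne
  have hbddP : BddBelow P := ⟨q₀, fun r hr => weak r hr q₀ hq₀⟩
  have hbddD : BddAbove D := ⟨r₀, fun q hq => weak r₀ hr₀ q hq⟩
  have hge : sSup D ≤ sInf P :=
    le_csInf ⟨r₀, hr₀⟩ fun r hr => csSup_le ⟨q₀, hq₀⟩ fun q hq => weak r hr q hq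
  have hlb : ∀ X : Matrix (Fin n) (Fin n) ℝ, X.PosDef → (∀ i, (A i * X).trace = b i) →
      sInf P ≤ (C * X).trace := by
    intro X hXpd hXfeas
    have hmem : (C * X).trace + C.trace * maxEig (-X) hXpd.1.neg ∈ P :=
      ⟨X, hXpd.1, hXfeas, rfl⟩
    have h1 : sInf P ≤ (C * X).trace + C.trace * maxEig (-X) hXpd.1.neg :=
      csInf_le hbddP hmem
    have h2 : maxEig (-X) hXpd.1.neg ≤ 0 := SDPAux.maxEig_nonpos hXpd.posSemidef
    nlinarith
  obtain ⟨y, Z, hZpsd, hZeq, hval⟩ :=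
    SDPAux.strong_dual hn A b C hA hC X₀ hX₀pd hX₀feas (sInf P) hlb
  have hmemD : (∑ i, b i * y i) ∈ D := ⟨y, Z, hZpsd, hZeq, rfl⟩
  have hle : sInf P ≤ sSup D := le_trans hval (le_csSup hbddD hmemD)
  linarith
end

section
/- Let f : ℝ^n → ℝ be convex and let F_α(W) = min_{X ∈ 𝒳₀} [f(X) + (α/2)‖X − W‖²] be the Moreau-type proximal value over a closed convex set 𝒳₀. Fix a minimizer x* of f over 𝒳₀ with optimal value f*. Then for any W ∈ 𝒳₀ with W ≠ x*: F_α(W) ≤ f(W) − (α/2)‖W − x*‖² Φ((f(W) − f*)/(α‖W − x*‖²)), where Φ(t) = t² for 0 ≤ t ≤ 1 and Φ(t) = 2t − 1 for t > 1. -/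
/-- The piecewise function `Φ(t) = t²` for `t ≤ 1` and `Φ(t) = 2t − 1` for `t > 1`. -/
noncomputable def Phi (t : ℝ) : ℝ := if t ≤ 1 then t ^ 2 else 2 * t - 1

/-- Proximal-gap bound: for convex `f` on a closed convex set `𝒳₀` with minimizer `x*`,
and any `W ∈ 𝒳₀`, `W ≠ x*`, the Moreau-type proximal value satisfies
`F_α(W) ≤ f(W) − (α/2)‖W − x*‖² Φ((f(W) − f*)/(α‖W − x*‖²))`. -/
theorem stmt12 {n : ℕ} (X0 : Set (EuclideanSpace ℝ (Fin n)))
    (hX0closed : IsClosed X0) (hX0conv : Convex ℝ X0)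
    (f : EuclideanSpace ℝ (Fin n) → ℝ) (hf : ConvexOn ℝ X0 f)
    (α : ℝ) (hα : 0 < α)
    (xs : EuclideanSpace ℝ (Fin n)) (hxs : xs ∈ X0) (hxsmin : IsMinOn f X0 xs)
    (W : EuclideanSpace ℝ (Fin n)) (hW : W ∈ X0) (hWne : W ≠ xs) :
    sInf ((fun X => f X + α / 2 * ‖X - W‖ ^ 2) '' X0)
      ≤ f W - α / 2 * ‖W - xs‖ ^ 2 * Phi ((f W - f xs) / (α * ‖W - xs‖ ^ 2)) := by
  have hne : W - xs ≠ 0 := sub_ne_zero.mpr hWne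
  set d := ‖W - xs‖ ^ 2 with hd
  have hdpos : 0 < d := by
    have : 0 < ‖W - xs‖ := norm_pos_iff.mpr hne
    positivity
  have hfW : f xs ≤ f W := hxsmin hW
  set t := (f W - f xs) / (α * d) with hts
  have ht0 : 0 ≤ t := div_nonneg (by linarith) (by positivity)
  have htmul : t * (α * d) = f W - f xs := by
    rw [hts]; exact div_mul_cancel₀ _ (mul_pos hα hdpos).ne'
  have key : ∀ θ : ℝ, 0 ≤ θ → θ ≤ 1 →
      sInf ((fun X => f X + α / 2 * ‖X - W‖ ^ 2) '' X0)
        ≤ f W - θ * (f W - f xs) + α / 2 * θ ^ 2 * d := by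
    intro θ h0 h1
    have hmem : (1 - θ) • W + θ • xs ∈ X0 := hX0conv hW hxs (by linarith) h0 (by ring)
    have hbdd : BddBelow ((fun X => f X + α / 2 * ‖X - W‖ ^ 2) '' X0) := by
      refine ⟨f xs, ?_⟩
      rintro _ ⟨X, hX, rfl⟩
      have hle : f xs ≤ f X := hxsmin hX
      have h2 : 0 ≤ α / 2 * ‖X - W‖ ^ 2 := by positivity
      simp only
      linarith
    have hle := csInf_le hbdd ⟨_, hmem, rfl⟩
    refine hle.trans ?_
    have hfle : f ((1 - θ) • W + θ • xs) ≤ (1 - θ) * f W + θ * f xs :=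
      hf.2 hW hxs (by linarith) h0 (by ring)
    have heq : (1 - θ) • W + θ • xs - W = θ • (xs - W) := by
      module
    have hnorm : ‖(1 - θ) • W + θ • xs - W‖ ^ 2 = θ ^ 2 * d := by
      rw [heq, norm_smul, hd, ← norm_neg (W - xs)]
      simp [mul_pow, abs_of_nonneg h0, neg_sub]
    simp only [hnorm]
    nlinarith [sq_nonneg θ]
  rw [Phi]
  split_ifs with h1
  · have := key t ht0 h1
    have heq2 : t * (f W - f xs) = α * d * t ^ 2 := by
      nlinarith [htmul]
    calc sInf ((fun X => f X + α / 2 * ‖X - W‖ ^ 2) '' X0)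
        ≤ f W - t * (f W - f xs) + α / 2 * t ^ 2 * d := this
      _ = f W - α / 2 * d * t ^ 2 := by rw [heq2]; ring
  · have := key 1 zero_le_one le_rfl
    have : sInf ((fun X => f X + α / 2 * ‖X - W‖ ^ 2) '' X0)
        ≤ f W - (f W - f xs) + α / 2 * d := by
      simpa using this
    have heq2 : f W - α / 2 * d * (2 * t - 1) = f W - (f W - f xs) + α / 2 * d := by
      nlinarith [htmul]
    linarith
end

section
/- Let f : 𝒳₀ → ℝ be convex on a closed convex set 𝒳₀ with minimizer set 𝒞 and optimal value f*, and suppose f satisfies quadratic growth: f(x) − f* ≥ c·dist²(x, 𝒞) for all x ∈ 𝒳₀ and some c > 0. Fix W ∈ 𝒳₀ and let F̂ ≤ f be any convex minorant model on 𝒳₀ with proximal minimizer X⁺ = argmin_{X∈𝒳₀}[F̂(X) + (α/2)‖X−W‖²]. Then f(W) − f* ≤ [f(W) − (F̂(X⁺) + (α/2)‖X⁺ − W‖²)] / min{c/(2α), 1/2}. -/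
set_option maxHeartbeats 800000


/-- Under quadratic growth, the optimality gap at `W` is controlled by the model proximal
decrease: `f(W) − f* ≤ [f(W) − (F̂(X⁺) + (α/2)‖X⁺ − W‖²)] / min{c/(2α), 1/2}`. -/
theorem stmt13 {n : ℕ} (X0 : Set (EuclideanSpace ℝ (Fin n)))
    (hX0closed : IsClosed X0) (hX0conv : Convex ℝ X0)
    (f : EuclideanSpace ℝ (Fin n) → ℝ) (hf : ConvexOn ℝ X0 f)
    (fstar : ℝ) (Cset : Set (EuclideanSpace ℝ (Fin n)))
    (hCdef : Cset = {x ∈ X0 | f x = fstar}) (hCne : Cset.Nonempty)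
    (hlow : ∀ x ∈ X0, fstar ≤ f x)
    (c : ℝ) (hc : 0 < c)
    (hqg : ∀ x ∈ X0, c * Metric.infDist x Cset ^ 2 ≤ f x - fstar)
    (α : ℝ) (hα : 0 < α)
    (W : EuclideanSpace ℝ (Fin n)) (hW : W ∈ X0)
    (Fhat : EuclideanSpace ℝ (Fin n) → ℝ) (hFhatconv : ConvexOn ℝ X0 Fhat)
    (hminorant : ∀ x ∈ X0, Fhat x ≤ f x)
    (Xp : EuclideanSpace ℝ (Fin n)) (hXp : Xp ∈ X0)
    (hXpmin : IsMinOn (fun X => Fhat X + α / 2 * ‖X - W‖ ^ 2) X0 Xp) :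
    f W - fstar ≤ (f W - (Fhat Xp + α / 2 * ‖Xp - W‖ ^ 2)) / min (c / (2 * α)) (1 / 2) := by
  set D := Metric.infDist W Cset with hD
  set P := Fhat Xp + α / 2 * ‖Xp - W‖ ^ 2 with hP
  set g := f W - fstar with hg
  have hg0 : 0 ≤ g := by have := hlow W hW; simp [hg]; linarith
  have hD0 : 0 ≤ D := Metric.infDist_nonneg
  set t := min (c / α) 1 with ht
  have ht0 : 0 < t := lt_min (div_pos hc hα) one_pos
  have ht1 : t ≤ 1 := min_le_right _ _
  have key : ∀ ε > 0, t * g ≤ (f W - P) + α / 2 * t ^ 2 * (D + ε) ^ 2 := by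
    intro ε hε
    obtain ⟨y, hyC, hyd⟩ := (Metric.infDist_lt_iff hCne).mp (by linarith : D < D + ε)
    have hyX : y ∈ X0 := by rw [hCdef] at hyC; exact hyC.1
    have hyf : f y = fstar := by rw [hCdef] at hyC; exact hyC.2
    set z := (1 - t) • W + t • y with hz
    have hzX : z ∈ X0 := hX0conv hW hyX (by linarith) ht0.le (by ring)
    have h1 : P ≤ Fhat z + α / 2 * ‖z - W‖ ^ 2 := hXpmin hzX
    have h2 : Fhat z ≤ f z := hminorant z hzX
    have h3 : f z ≤ (1 - t) * f W + t * fstar := by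
      have := hf.2 hW hyX (by linarith : (0:ℝ) ≤ 1 - t) ht0.le (by ring)
      rw [hyf] at this; exact this
    have h4 : ‖z - W‖ = t * dist W y := by
      have hzw : z - W = t • (y - W) := by rw [hz]; module
      rw [hzw, norm_smul, Real.norm_eq_abs, abs_of_pos ht0, dist_eq_norm, norm_sub_rev]
    have h5 : ‖z - W‖ ^ 2 ≤ t ^ 2 * (D + ε) ^ 2 := by
      rw [h4, mul_pow]
      have hd2 : dist W y ^ 2 ≤ (D + ε) ^ 2 := by
        nlinarith [dist_nonneg (x := W) (y := y)]
      nlinarith [sq_nonneg t]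
    have h6 : α / 2 * ‖z - W‖ ^ 2 ≤ α / 2 * t ^ 2 * (D + ε) ^ 2 := by
      nlinarith
    have hgexp : (1 - t) * f W + t * fstar = f W - t * g := by rw [hg]; ring
    linarith
  have key2 : t * g ≤ (f W - P) + α / 2 * t ^ 2 * D ^ 2 := by
    have hcont : Filter.Tendsto (fun ε : ℝ => (f W - P) + α / 2 * t ^ 2 * (D + ε) ^ 2)
        (nhdsWithin 0 (Set.Ioi 0)) (nhds ((f W - P) + α / 2 * t ^ 2 * (D + 0) ^ 2)) := by
      apply Filter.Tendsto.mono_left _ nhdsWithin_le_nhds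
      have hcts : Continuous (fun ε : ℝ => (f W - P) + α / 2 * t ^ 2 * (D + ε) ^ 2) :=
        continuous_const.add
          (continuous_const.mul ((continuous_const.add continuous_id).pow 2))
      exact hcts.tendsto 0
    have := ge_of_tendsto hcont
      (Filter.eventually_of_mem self_mem_nhdsWithin (fun ε hε => key ε hε))
    simpa using this
  have hD2 : D ^ 2 ≤ g / c := by
    have := hqg W hW
    rw [le_div_iff₀ hc]
    nlinarith
  have key3 : t * g - α / (2 * c) * t ^ 2 * g ≤ f W - P := by
    have h7 : α / 2 * t ^ 2 * D ^ 2 ≤ α / 2 * t ^ 2 * (g / c) :=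
      mul_le_mul_of_nonneg_left hD2 (by positivity)
    have h8 : α / 2 * t ^ 2 * (g / c) = α / (2 * c) * t ^ 2 * g := by
      field_simp
    linarith
  set m := min (c / (2 * α)) (1 / 2) with hm
  have hm0 : 0 < m := lt_min (by positivity) (by norm_num)
  have hmt : m ≤ t - α / (2 * c) * t ^ 2 := by
    rcases le_total c α with h | h
    · have ht' : t = c / α := min_eq_left (by rw [div_le_one hα]; exact h)
      have hm' : m ≤ c / (2 * α) := min_le_left _ _
      have heq : c / α - α / (2 * c) * (c / α) ^ 2 = c / (2 * α) := by
        field_simp; ring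
      rw [ht']; linarith
    · have ht' : t = 1 := min_eq_right ((one_le_div hα).mpr h)
      have hm' : m ≤ 1 / 2 := min_le_right _ _
      have hac : α / (2 * c) ≤ 1 / 2 := by
        rw [div_le_iff₀ (by linarith)]; linarith
      rw [ht']; linarith
  have hmg : m * g ≤ f W - P := by
    have h9 : m * g ≤ (t - α / (2 * c) * t ^ 2) * g :=
      mul_le_mul_of_nonneg_right hmt hg0
    have hexp : (t - α / (2 * c) * t ^ 2) * g = t * g - α / (2 * c) * t ^ 2 * g := by ring
    exact le_trans (hexp ▸ h9) key3
  rw [le_div_iff₀ hm0]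
  have hcomm : g * m = m * g := mul_comm g m
  linarith
end

section
/- Under the assumptions of the previous statement, if additionally a descent step occurs at W, i.e., the next point W⁺ = X⁺ satisfies β(f(W) − F̂(X⁺)) ≤ f(W) − f(X⁺) for some β ∈ (0,1), then f(W⁺) − f* ≤ (1 − β·μ̄)(f(W) − f*), where μ̄ = min{c/(2α), 1/2}. -/
/-- Under quadratic growth with constant `c`, if a descent step occurs at `W`, i.e.
`β (f(W) − F̂(X⁺)) ≤ f(W) − f(X⁺)` and `W⁺ = X⁺`, then
`f(W⁺) − f* ≤ (1 − β μ̄)(f(W) − f*)` where `μ̄ = min{c/(2α), 1/2}`. -/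
theorem stmt14 {n : ℕ} (X0 : Set (EuclideanSpace ℝ (Fin n)))
    (hX0closed : IsClosed X0) (hX0conv : Convex ℝ X0)
    (f : EuclideanSpace ℝ (Fin n) → ℝ) (hf : ConvexOn ℝ X0 f)
    (fstar : ℝ) (Cset : Set (EuclideanSpace ℝ (Fin n)))
    (hCdef : Cset = {x ∈ X0 | f x = fstar}) (hCne : Cset.Nonempty)
    (hlow : ∀ x ∈ X0, fstar ≤ f x)
    (c : ℝ) (hc : 0 < c)
    (hqg : ∀ x ∈ X0, c * Metric.infDist x Cset ^ 2 ≤ f x - fstar)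
    (α : ℝ) (hα : 0 < α)
    (W : EuclideanSpace ℝ (Fin n)) (hW : W ∈ X0)
    (Fhat : EuclideanSpace ℝ (Fin n) → ℝ) (hFhatconv : ConvexOn ℝ X0 Fhat)
    (hminorant : ∀ x ∈ X0, Fhat x ≤ f x)
    (Xp : EuclideanSpace ℝ (Fin n)) (hXp : Xp ∈ X0)
    (hXpmin : IsMinOn (fun X => Fhat X + α / 2 * ‖X - W‖ ^ 2) X0 Xp)
    (β : ℝ) (hβ0 : 0 < β) (hβ1 : β < 1)
    (hdescent : β * (f W - Fhat Xp) ≤ f W - f Xp) :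
    f Xp - fstar ≤ (1 - β * min (c / (2 * α)) (1 / 2)) * (f W - fstar) := by
  set d := Metric.infDist W Cset with hd
  set t := min (c / α) 1 with htdef
  have ht0 : 0 < t := lt_min (div_pos hc hα) one_pos
  have ht1 : t ≤ 1 := min_le_right _ _
  have hd0 : 0 ≤ d := Metric.infDist_nonneg
  have hΔ0 : 0 ≤ f W - fstar := by linarith [hlow W hW]
  have hqgW : c * d ^ 2 ≤ f W - fstar := hqg W hW
  -- key inequality for each Y in Cset
  have hkey : ∀ Y ∈ Cset, Fhat Xp ≤ (1 - t) * f W + t * fstar + α / 2 * t ^ 2 * ‖Y - W‖ ^ 2 := by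
    intro Y hY
    rw [hCdef] at hY
    obtain ⟨hYX0, hYf⟩ := hY
    set Xt := (1 - t) • W + t • Y with hXt
    have hXtX0 : Xt ∈ X0 := hX0conv hW hYX0 (by linarith) ht0.le (by ring)
    have hfXt : f Xt ≤ (1 - t) * f W + t * f Y := by
      have := hf.2 hW hYX0 (by linarith : (0:ℝ) ≤ 1 - t) ht0.le (by ring)
      simpa [smul_eq_mul] using this
    have hmin := isMinOn_iff.mp hXpmin Xt hXtX0
    have hsub : Xt - W = t • (Y - W) := by rw [hXt]; module
    have hnorm : ‖Xt - W‖ ^ 2 = t ^ 2 * ‖Y - W‖ ^ 2 := by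
      rw [hsub, norm_smul, Real.norm_eq_abs, abs_of_pos ht0, mul_pow]
    have hFXt : Fhat Xt ≤ f Xt := hminorant Xt hXtX0
    have hXpW : (0:ℝ) ≤ ‖Xp - W‖ ^ 2 := by positivity
    rw [hnorm] at hmin
    have hα2 : (0:ℝ) < α / 2 := by linarith
    nlinarith [hmin, hFXt, hfXt]
  -- pass to infimum
  have hmain : Fhat Xp ≤ (1 - t) * f W + t * fstar + α / 2 * t ^ 2 * d ^ 2 := by
    have hev : ∀ ε ∈ Set.Ioi (0:ℝ),
        Fhat Xp ≤ (1 - t) * f W + t * fstar + α / 2 * t ^ 2 * (d + ε) ^ 2 := by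
      intro ε hε
      obtain ⟨Y, hYC, hYd⟩ := (Metric.infDist_lt_iff hCne).mp
        (lt_add_of_pos_right d (Set.mem_Ioi.mp hε))
      have hnlt : ‖Y - W‖ < d + ε := by
        rw [dist_comm, dist_eq_norm] at hYd
        simpa [norm_sub_rev] using hYd
      have h1 := hkey Y hYC
      have hn0 : (0:ℝ) ≤ ‖Y - W‖ := norm_nonneg _
      have hsq : ‖Y - W‖ ^ 2 ≤ (d + ε) ^ 2 := by nlinarith
      have hmul : α / 2 * t ^ 2 * ‖Y - W‖ ^ 2 ≤ α / 2 * t ^ 2 * (d + ε) ^ 2 :=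
        mul_le_mul_of_nonneg_left hsq (by positivity)
      linarith
    have hcont : Filter.Tendsto
        (fun ε : ℝ => (1 - t) * f W + t * fstar + α / 2 * t ^ 2 * (d + ε) ^ 2)
        (nhdsWithin 0 (Set.Ioi 0))
        (nhds ((1 - t) * f W + t * fstar + α / 2 * t ^ 2 * (d + 0) ^ 2)) := by
      apply Filter.Tendsto.mono_left _ nhdsWithin_le_nhds
      exact (Continuous.tendsto (by fun_prop) 0)
    have := ge_of_tendsto hcont (eventually_nhdsWithin_of_forall hev)
    simpa using this
  -- key decrease: f W - Fhat Xp ≥ μ (f W - fstar)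
  set μ := min (c / (2 * α)) (1 / 2) with hμdef
  have hdec : μ * (f W - fstar) ≤ f W - Fhat Xp := by
    rcases le_total (c / α) 1 with hca | hca
    · have hcα : c ≤ α := (div_le_one hα).mp hca
      have htval : t = c / α := min_eq_left hca
      have hμval : μ = c / (2 * α) := min_eq_left (by
        rw [div_le_div_iff₀ (by positivity : (0:ℝ) < 2 * α) (by norm_num : (0:ℝ) < 2)]; linarith)
      have h5 : c / (2 * α) = (c / α) / 2 := by ring
      rw [hμval, h5]
      rw [htval] at hmain
      have h2 : α / 2 * (c / α) ^ 2 * d ^ 2 ≤ (c / α) / 2 * (f W - fstar) := by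
        have e : α / 2 * (c / α) ^ 2 * d ^ 2 = (c / α) / 2 * (c * d ^ 2) := by
          field_simp
        rw [e]
        exact mul_le_mul_of_nonneg_left hqgW (by positivity)
      linarith
    · have hαc : α ≤ c := by have := (le_div_iff₀ hα).mp hca; linarith
      have htval : t = 1 := min_eq_right hca
      have hμval : μ = 1 / 2 := min_eq_right (by
        rw [div_le_div_iff₀ (by norm_num : (0:ℝ) < 2) (by positivity : (0:ℝ) < 2 * α)]; linarith)
      rw [hμval]
      rw [htval] at hmain
      have h2 : α / 2 * 1 ^ 2 * d ^ 2 ≤ 1 / 2 * (f W - fstar) := by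
        have := mul_le_mul_of_nonneg_right hαc (sq_nonneg d)
        linarith
      linarith
  have hμ0 : 0 ≤ μ := le_min (by positivity) (by norm_num)
  -- combine with descent test
  have h4 : β * (μ * (f W - fstar)) ≤ f W - f Xp := by
    calc β * (μ * (f W - fstar)) ≤ β * (f W - Fhat Xp) :=
          mul_le_mul_of_nonneg_left hdec hβ0.le
      _ ≤ f W - f Xp := hdescent
  linarith [h4]
end

section
/- Suppose f : ℝ^n → ℝ is convex, the model f̂ satisfies f̂(X) ≤ f(X) ≤ f̂(X) + (η/2)‖X − Ω‖² for all X ∈ 𝒳₀ (quadratic closeness), and let X⁺ = argmin_{X∈𝒳₀}[f̂(X) + (α/2)‖X − Ω‖²] with α ≥ η. Then f(Ω) − f(X⁺) ≥ (α/2)‖X⁺ − Ω‖², and for any β ∈ (0, 1/2], the descent test β(f(Ω) − f̂(X⁺)) ≤ f(Ω) − f(X⁺) is satisfied. -/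
/-- If the model `f̂` is quadratically close to the convex function `f` on `𝒳₀`
(`f̂ ≤ f ≤ f̂ + (η/2)‖· − Ω‖²`) and `X⁺` is the proximal minimizer of the model with `α ≥ η`,
then `f(Ω) − f(X⁺) ≥ (α/2)‖X⁺ − Ω‖²`, and for any `β ∈ (0, 1/2]` the descent test
`β (f(Ω) − f̂(X⁺)) ≤ f(Ω) − f(X⁺)` is satisfied. -/
theorem stmt16 {n : ℕ} (X0 : Set (EuclideanSpace ℝ (Fin n)))
    (hX0closed : IsClosed X0) (hX0conv : Convex ℝ X0)
    (f fhat : EuclideanSpace ℝ (Fin n) → ℝ)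
    (hf : ConvexOn ℝ Set.univ f) (hfhat : ConvexOn ℝ X0 fhat)
    (η α : ℝ) (hη : 0 < η) (hαη : η ≤ α)
    (Ω : EuclideanSpace ℝ (Fin n)) (hΩ : Ω ∈ X0)
    (hclose : ∀ X ∈ X0, fhat X ≤ f X ∧ f X ≤ fhat X + η / 2 * ‖X - Ω‖ ^ 2)
    (Xp : EuclideanSpace ℝ (Fin n)) (hXp : Xp ∈ X0)
    (hmin : IsMinOn (fun X => fhat X + α / 2 * ‖X - Ω‖ ^ 2) X0 Xp) :
    α / 2 * ‖Xp - Ω‖ ^ 2 ≤ f Ω - f Xp ∧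
    ∀ β : ℝ, 0 < β → β ≤ 1 / 2 → β * (f Ω - fhat Xp) ≤ f Ω - f Xp := by
  set d2 : ℝ := ‖Xp - Ω‖ ^ 2 with hd2
  have hd2nn : 0 ≤ d2 := by positivity
  -- key strong-convexity step with parameter t
  have key : ∀ t : ℝ, 0 < t → t ≤ 1 →
      fhat Xp + α / 2 * (2 - t) * d2 ≤ fhat Ω := by
    intro t ht0 ht1
    set Xt : EuclideanSpace ℝ (Fin n) := (1 - t) • Xp + t • Ω with hXt
    have hmem : Xt ∈ X0 := hX0conv hXp hΩ (by linarith) ht0.le (by ring)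
    have hconv : fhat Xt ≤ (1 - t) * fhat Xp + t * fhat Ω :=
      hfhat.2 hXp hΩ (by linarith) ht0.le (by ring)
    have hnorm : ‖Xt - Ω‖ ^ 2 = (1 - t) ^ 2 * d2 := by
      have : Xt - Ω = (1 - t) • (Xp - Ω) := by
        rw [hXt]
        module
      rw [this, norm_smul]
      simp [hd2, mul_pow, sq_abs]
    have hm := hmin hmem
    simp only [Set.mem_setOf_eq, hnorm] at hm
    rw [← hd2] at hm
    -- hm : fhat Xp + α/2 * d2 ≤ fhat Xt + α/2 * ((1-t)^2 * d2)
    have h2 : fhat Xp + α / 2 * d2 ≤ (1 - t) * fhat Xp + t * fhat Ω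
        + α / 2 * ((1 - t) ^ 2 * d2) := by linarith
    nlinarith [mul_pos ht0 ht0, sq_nonneg t]
  -- take limit t → 0⁺
  have hkey : fhat Xp + α * d2 ≤ fhat Ω := by
    have htend : Filter.Tendsto (fun t : ℝ => fhat Xp + α / 2 * (2 - t) * d2)
        (nhdsWithin 0 (Set.Ioi 0)) (nhds (fhat Xp + α * d2)) := by
      have : Filter.Tendsto (fun t : ℝ => fhat Xp + α / 2 * (2 - t) * d2)
          (nhds 0) (nhds (fhat Xp + α / 2 * (2 - 0) * d2)) := by
        apply Continuous.tendsto
        continuity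
      have h0 : fhat Xp + α / 2 * (2 - 0) * d2 = fhat Xp + α * d2 := by ring
      rw [h0] at this
      exact this.mono_left nhdsWithin_le_nhds
    have hev : ∀ᶠ t in nhdsWithin (0:ℝ) (Set.Ioi 0),
        (fun t : ℝ => fhat Xp + α / 2 * (2 - t) * d2) t ≤ fhat Ω := by
      have hIoo : Set.Ioo (0:ℝ) 1 ∈ nhdsWithin (0:ℝ) (Set.Ioi 0) :=
        Ioo_mem_nhdsGT_of_mem (by constructor <;> norm_num)
      filter_upwards [hIoo] with t ht
      exact key t ht.1 ht.2.le
    exact le_of_tendsto htend hev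
  have hfΩ : fhat Ω ≤ f Ω := (hclose Ω hΩ).1
  have hfXp : f Xp ≤ fhat Xp + η / 2 * d2 := (hclose Xp hXp).2
  have hηα : η / 2 * d2 ≤ α / 2 * d2 := by nlinarith
  constructor
  · linarith
  · intro β hβ0 hβ2
    have h1 : α * d2 ≤ f Ω - fhat Xp := by linarith
    have h2 : 0 ≤ f Ω - fhat Xp := le_trans (mul_nonneg (by linarith) hd2nn) h1
    have h3 : f Ω - f Xp ≥ (f Ω - fhat Xp) - α / 2 * d2 := by linarith
    nlinarith
end

section
/- Consider the penalized primal SDP objective F(X) = ⟨C,X⟩ + ρ·max{λ_max(−X), 0} over the affine set 𝒳₀ = {X : A(X)=b}, with exact penalty parameter ρ > 2·max_{(y*,Z*)∈D*} tr(Z*) + 1. Then for any X ∈ 𝒳₀ and any fixed primal-dual optimal pair (X*, y*, Z*) with ⟨X*,Z*⟩=0, one has F(X) − F(X*) ≥ |⟨C,X⟩ − ⟨C,X*⟩| + max{λ_max(−X), 0}. -/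
open Matrix

section helpers

variable {n : ℕ}

lemma psd_diag_nonneg {M : Matrix (Fin n) (Fin n) ℝ} (hM : M.PosSemidef) (i : Fin n) :
    0 ≤ M i i := by
  have h := hM.dotProduct_mulVec_nonneg (Pi.single i 1)
  simpa [dotProduct, mulVec, Pi.single_apply, Finset.sum_ite_eq, Finset.sum_ite_eq'] using h

lemma psd_trace_nonneg {M : Matrix (Fin n) (Fin n) ℝ} (hM : M.PosSemidef) :
    0 ≤ M.trace := by
  rw [Matrix.trace]
  exact Finset.sum_nonneg fun i _ => psd_diag_nonneg hM i

lemma psd_trace_mul_nonneg {A B : Matrix (Fin n) (Fin n) ℝ}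
    (hA : A.PosSemidef) (hB : B.PosSemidef) : 0 ≤ (A * B).trace := by
  classical
  open scoped MatrixOrder in
  have hs := (CFC.sqrt_nonneg B).posSemidef
  open scoped MatrixOrder in
  have h1 : (CFC.sqrt B * A * (CFC.sqrt B)ᴴ).PosSemidef := hA.mul_mul_conjTranspose_same _
  rw [hs.1] at h1
  open scoped MatrixOrder in
  have h2 : (A * B).trace = (CFC.sqrt B * A * CFC.sqrt B).trace := by
    conv_lhs => rw [← CFC.sqrt_mul_sqrt_self B hB.nonneg]
    rw [← mul_assoc, trace_mul_comm, ← mul_assoc]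
  rw [h2]
  exact psd_trace_nonneg h1

lemma smul_one_sub_posSemidef {B : Matrix (Fin n) (Fin n) ℝ} (hB : B.IsHermitian) {t : ℝ}
    (h : ∀ i, hB.eigenvalues i ≤ t) :
    (t • (1 : Matrix (Fin n) (Fin n) ℝ) - B).PosSemidef := by
  classical
  have hspec : B = (hB.eigenvectorUnitary : Matrix (Fin n) (Fin n) ℝ) *
      diagonal hB.eigenvalues * star (hB.eigenvectorUnitary : Matrix (Fin n) (Fin n) ℝ) := by
    simpa using hB.spectral_theorem
  set U : Matrix (Fin n) (Fin n) ℝ := (hB.eigenvectorUnitary : Matrix (Fin n) (Fin n) ℝ)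
  have hU : U * star U = 1 := Matrix.mem_unitaryGroup_iff.mp hB.eigenvectorUnitary.2
  have hd : diagonal (fun i => t - hB.eigenvalues i) =
      t • (1 : Matrix (Fin n) (Fin n) ℝ) - diagonal hB.eigenvalues := by
    ext i j
    by_cases hij : i = j <;> simp [diagonal, hij, Matrix.one_apply]
  have key : t • (1 : Matrix (Fin n) (Fin n) ℝ) - B =
      U * diagonal (fun i => t - hB.eigenvalues i) * star U := by
    rw [hd, Matrix.mul_sub, Matrix.sub_mul, ← hspec]
    congr 1
    rw [mul_smul_comm, mul_one, smul_mul_assoc, hU]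
  rw [key]
  have hdiag : (diagonal (fun i => t - hB.eigenvalues i)).PosSemidef :=
    posSemidef_diagonal_iff.mpr fun i => sub_nonneg.mpr (h i)
  simpa [Matrix.star_eq_conjTranspose] using hdiag.mul_mul_conjTranspose_same U

lemma trace_expand {m : ℕ} (A : Fin m → Matrix (Fin n) (Fin n) ℝ)
    (y : Fin m → ℝ) (Z C X : Matrix (Fin n) (Fin n) ℝ)
    (hZeq : Z + ∑ i, y i • A i = C) :
    (C * X).trace = (Z * X).trace + ∑ i, y i * (A i * X).trace := by
  rw [← hZeq, add_mul, trace_add, Finset.sum_mul]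
  congr 1
  simp only [smul_mul_assoc, trace_sum, trace_smul, smul_eq_mul]

end helpers

/-- Growth inequality for the exactly penalized primal objective
`F(X) = ⟨C,X⟩ + ρ·max{λ_max(−X), 0}` over `𝒳₀ = {X | A(X) = b}`: if
`ρ > 2·max_{(y*,Z*) ∈ D*} tr(Z*) + 1` and `(X*, y*, Z*)` is a primal-dual optimal pair with
`⟨X*, Z*⟩ = 0`, then for all `X ∈ 𝒳₀`,
`F(X) − F(X*) ≥ |⟨C,X⟩ − ⟨C,X*⟩| + max{λ_max(−X), 0}`. -/
theorem stmt18 {n m : ℕ} (hn : 0 < n) (A : Fin m → Matrix (Fin n) (Fin n) ℝ)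
    (b : Fin m → ℝ) (C : Matrix (Fin n) (Fin n) ℝ) (ρ : ℝ)
    (Xs : Matrix (Fin n) (Fin n) ℝ) (ys : Fin m → ℝ) (Zs : Matrix (Fin n) (Fin n) ℝ)
    (hXs : Xs.PosSemidef) (hXfeas : ∀ i, (A i * Xs).trace = b i)
    (hZs : Zs.PosSemidef) (hZeq : Zs + ∑ i, ys i • A i = C)
    (hcomp : (Xs * Zs).trace = 0)
    (hρ : ∀ (y : Fin m → ℝ) (Z : Matrix (Fin n) (Fin n) ℝ), Z.PosSemidef →
      Z + ∑ i, y i • A i = C →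
      (∀ (y' : Fin m → ℝ) (Z' : Matrix (Fin n) (Fin n) ℝ), Z'.PosSemidef →
        Z' + ∑ i, y' i • A i = C → ∑ i, b i * y' i ≤ ∑ i, b i * y i) →
      2 * Z.trace + 1 < ρ) :
    ∀ (X : Matrix (Fin n) (Fin n) ℝ) (hX : X.IsHermitian), (∀ i, (A i * X).trace = b i) →
      |(C * X).trace - (C * Xs).trace| + max (maxEig (-X) hX.neg) 0 ≤
        ((C * X).trace + ρ * max (maxEig (-X) hX.neg) 0) -
          ((C * Xs).trace + ρ * max (maxEig (-Xs) hXs.1.neg) 0) := by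
  intro X hX hXf
  haveI : Nonempty (Fin n) := ⟨⟨0, hn⟩⟩
  have hZsXs : (Zs * Xs).trace = 0 := by rwa [trace_mul_comm]
  -- max eigenvalue of -Xs is ≤ 0
  have hXsEig : maxEig (-Xs) hXs.1.neg ≤ 0 := by
    apply ciSup_le
    intro i
    rw [Matrix.IsHermitian.eigenvalues_eq]
    have h := hXs.dotProduct_mulVec_nonneg (⇑(hXs.1.neg.eigenvectorBasis i))
    simp only [neg_mulVec, dotProduct_neg, map_neg]
    simpa using neg_nonpos.mpr h
  have hmXs : max (maxEig (-Xs) hXs.1.neg) 0 = 0 := max_eq_right hXsEig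
  set t : ℝ := max (maxEig (-X) hX.neg) 0 with htdef
  have ht0 : 0 ≤ t := le_max_right _ _
  -- X + t•1 is PSD
  have hXt : (t • (1 : Matrix (Fin n) (Fin n) ℝ) - (-X)).PosSemidef := by
    apply smul_one_sub_posSemidef hX.neg
    intro i
    exact le_trans (le_ciSup (Set.Finite.bddAbove (Set.finite_range _)) i) (le_max_left _ _)
  rw [sub_neg_eq_add] at hXt
  -- trace inequality: 0 ≤ t * tr Zs + tr (Zs X)
  have hc : 0 ≤ t * Zs.trace + (Zs * X).trace := by
    have h := psd_trace_mul_nonneg hZs hXt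
    rwa [Matrix.mul_add, trace_add, Matrix.mul_smul, Matrix.mul_one, trace_smul,
      smul_eq_mul] at h
  have htrZ : 0 ≤ Zs.trace := psd_trace_nonneg hZs
  -- dual optimality of (ys, Zs)
  have hopt : ∀ (y' : Fin m → ℝ) (Z' : Matrix (Fin n) (Fin n) ℝ), Z'.PosSemidef →
      Z' + ∑ i, y' i • A i = C → ∑ i, b i * y' i ≤ ∑ i, b i * ys i := by
    intro y' Z' hZ' hfeas
    have h1 := trace_expand A y' Z' C Xs hfeas
    have h2 := trace_expand A ys Zs C Xs hZeq
    have h3 : 0 ≤ (Z' * Xs).trace := psd_trace_mul_nonneg hZ' hXs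
    simp only [hXfeas] at h1 h2
    have e1 : ∑ i, b i * y' i = ∑ i, y' i * b i := by
      apply Finset.sum_congr rfl; intros; ring
    have e2 : ∑ i, b i * ys i = ∑ i, ys i * b i := by
      apply Finset.sum_congr rfl; intros; ring
    rw [e1, e2]
    linarith [hZsXs, h1, h2, h3]
  have hρ' : 2 * Zs.trace + 1 < ρ := hρ ys Zs hZs hZeq hopt
  -- key identities
  have hCX := trace_expand A ys Zs C X hZeq
  have hCXs := trace_expand A ys Zs C Xs hZeq
  simp only [hXf] at hCX
  simp only [hXfeas] at hCXs
  have hdiff : (C * X).trace - (C * Xs).trace = (Zs * X).trace := by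
    rw [hCX, hCXs, hZsXs]; ring
  rw [hmXs, mul_zero, add_zero]
  rcases abs_cases ((C * X).trace - (C * Xs).trace) with ⟨he, _⟩ | ⟨he, _⟩ <;>
    nlinarith [hc, ht0, htrZ, hρ', hdiff]
end
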